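/- arXiv:1012.0999 — 6 statements merged into one kernel-verified Lean document; each statement's English description precedes it below -/
import Mathlib

section
/- Let f, g : ℝ³ × ℝ³ → ℝ be smooth with f compactly supported, and let U : ℝ³ → ℝ³ be smooth. Then ∫_{ℝ³}∫_{ℝ³} f(x,v) [ U(x)·∂_x g(x,v) + ((v·∇)U(x))·∂_v g(x,v) ] dv dx = ∫_{ℝ³} U(x)·F(x) dx, where F_i(x) = ∫_{ℝ³} f ∂_{x_i} g dv − Σ_j ∂_{x_j} ∫_{ℝ³} f v_j ∂_{v_i} g dv. -/
open MeasureTheory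

noncomputable section

/-- 3-vectors, with coordinates indexed by `Fin 3`. -/
abbrev V3 := Fin 3 → ℝ

/-- Euclidean dot product on `ℝ³`. -/
def dot3 (a b : V3) : ℝ := ∑ i, a i * b i

/-- Cross product on `ℝ³`. -/
def cross3 (a b : V3) : V3 :=
  ![a 1 * b 2 - a 2 * b 1, a 2 * b 0 - a 0 * b 2, a 0 * b 1 - a 1 * b 0]

/-- Partial derivative of a scalar field in the `i`-th coordinate direction. -/
def pd (i : Fin 3) (g : V3 → ℝ) (x : V3) : ℝ := fderiv ℝ g x (Pi.single i 1)

/-- Divergence of a vector field on `ℝ³`. -/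
def vdiv (F : V3 → V3) (x : V3) : ℝ := ∑ i, pd i (fun y => F y i) x

/-- Curl of a vector field on `ℝ³`. -/
def vcurl (F : V3 → V3) (x : V3) : V3 :=
  ![pd 1 (fun y => F y 2) x - pd 2 (fun y => F y 1) x,
    pd 2 (fun y => F y 0) x - pd 0 (fun y => F y 2) x,
    pd 0 (fun y => F y 1) x - pd 1 (fun y => F y 0) x]

open Set Function Topology

lemma pd_eq_zero_of_not_mem_tsupport {φ : V3 → ℝ} {x : V3} (hx : x ∉ tsupport φ)
    (j : Fin 3) : pd j φ x = 0 := by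
  have h0 : fderiv ℝ φ x = 0 := by
    by_contra h0
    exact hx (support_fderiv_subset ℝ (Function.mem_support.2 h0))
  simp [pd, h0]

set_option maxHeartbeats 1000000 in
lemma integral_pd_eq_zero (j : Fin 3) (φ : V3 → ℝ) (hφ : ContDiff ℝ 1 φ)
    (hsupp : HasCompactSupport φ) : ∫ x : V3, pd j φ x = 0 := by
  obtain ⟨R, hR0, hR⟩ : ∃ R, 0 < R ∧ tsupport φ ⊆ Metric.ball 0 R :=
    (hsupp.isBounded.subset_ball_lt 0 0).imp (fun R h => ⟨h.1, h.2⟩)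
  set a : V3 := fun _ => -R with ha
  set b : V3 := fun _ => R with hb
  have hle : a ≤ b := fun i => by simp only [ha, hb]; linarith
  have hball_Icc : Metric.ball (0 : V3) R ⊆ Set.Icc a b := by
    intro x hx
    simp only [Metric.mem_ball, dist_zero_right] at hx
    have h' : ∀ i, |x i| ≤ ‖x‖ := fun i => norm_le_pi_norm x i
    constructor <;> intro i
    · have := (abs_le.1 ((h' i).trans hx.le)).1; simpa [ha] using this
    · have := (abs_le.1 ((h' i).trans hx.le)).2; simpa [hb] using this
  have hnot : ∀ x : V3, x ∉ Set.Icc a b → pd j φ x = 0 := fun x hx =>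
    pd_eq_zero_of_not_mem_tsupport (fun hmem => hx (hball_Icc (hR hmem))) j
  have hcont_pd : Continuous (pd j φ) := by
    have : Continuous (fderiv ℝ φ) := hφ.continuous_fderiv one_ne_zero
    exact (ContinuousLinearMap.apply ℝ ℝ (Pi.single j (1:ℝ))).continuous.comp this
  have hEq : ∀ x : V3, (∑ i, (if i = j then fderiv ℝ φ x else 0) (Pi.single i (1:ℝ)))
      = pd j φ x := by
    intro x
    rw [Finset.sum_eq_single j]
    · simp [pd]
    · intro i _ hij; simp [hij]
    · simp
  have hface : ∀ (c : ℝ), |c| = R → ∀ (i : Fin 3) (x : Fin 2 → ℝ),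
      φ (Fin.insertNth (α := fun _ => ℝ) i c x) = 0 := by
    intro c hc i x
    refine image_eq_zero_of_notMem_tsupport (fun hmem => ?_)
    have hlt := hR hmem
    simp only [Metric.mem_ball, dist_zero_right] at hlt
    have h1 := norm_le_pi_norm (Fin.insertNth (α := fun _ => ℝ) i c x) i
    rw [Fin.insertNth_apply_same, Real.norm_eq_abs, hc] at h1
    exact absurd (h1.trans_lt hlt) (lt_irrefl R)
  have key := integral_divergence_of_hasFDerivAt_off_countable' (n := 2)
      a b hle (fun i y => if i = j then φ y else 0)
      (fun i x => if i = j then fderiv ℝ φ x else 0) ∅ Set.countable_empty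
      (by
        intro i
        by_cases h : i = j <;> simp [h, hφ.continuous.continuousOn, continuousOn_const])
      (by
        intro x _ i
        by_cases h : i = j
        · simpa [h] using (hφ.differentiable one_ne_zero x).hasFDerivAt
        · simpa [h] using hasFDerivAt_const (0 : ℝ) x)
      (by
        refine (integrable_congr (Filter.Eventually.of_forall ?_)).2
          hcont_pd.integrableOn_Icc
        intro x
        exact (hEq x))
  rw [Finset.sum_eq_zero (fun i _ => ?_)] at key
  · calc ∫ x : V3, pd j φ x
        = ∫ x in Set.Icc a b, pd j φ x :=
          (setIntegral_eq_integral_of_forall_compl_eq_zero hnot).symm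
      _ = ∫ x in Set.Icc a b, ∑ i, (if i = j then fderiv ℝ φ x else 0) (Pi.single i (1:ℝ)) :=
          setIntegral_congr_fun measurableSet_Icc fun x _ => (hEq x).symm
      _ = 0 := key
  · by_cases h : i = j
    · subst h
      simp only [eq_self_iff_true, if_true]
      rw [setIntegral_congr_fun (g := fun _ => (0:ℝ)) measurableSet_Icc
          (fun x _ => hface (b i) (by simp [hb, abs_of_pos hR0]) i x),
        setIntegral_congr_fun (g := fun _ => (0:ℝ)) measurableSet_Icc
          (fun x _ => hface (a i) (by simp [ha, abs_of_pos hR0]) i x)]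
      simp
    · simp [h]

section Parametric

/-- partial derivative in the first (x) slot, as a CLM. -/
def pFD (φ : V3 × V3 → ℝ) (x v : V3) : V3 →L[ℝ] ℝ :=
  (fderiv ℝ φ (x, v)).comp (ContinuousLinearMap.inl ℝ V3 V3)

variable {φ : V3 × V3 → ℝ}

lemma slice_hasCompactSupport (hsupp : HasCompactSupport φ) (x : V3) :
    HasCompactSupport fun v => φ (x, v) := by
  refine HasCompactSupport.intro (hsupp.image continuous_snd) (fun v hv => ?_)
  by_contra h0
  exact hv ⟨(x, v), subset_tsupport _ (Function.mem_support.2 h0), rfl⟩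

lemma slice_integrable (hφ : ContDiff ℝ (⊤ : ℕ∞) φ) (hsupp : HasCompactSupport φ) (x : V3) :
    Integrable fun v => φ (x, v) :=
  (hφ.continuous.comp (Continuous.prodMk_right x)).integrable_of_hasCompactSupport
    (slice_hasCompactSupport hsupp x)

lemma pFD_eq_zero_of_snd_not_mem (hsupp : HasCompactSupport φ) {v : V3}
    (hv : v ∉ Prod.snd '' tsupport φ) (x : V3) : pFD φ x v = 0 := by
  have h0 : fderiv ℝ φ (x, v) = 0 := by
    by_contra h0
    exact hv ⟨(x, v), support_fderiv_subset ℝ (Function.mem_support.2 h0), rfl⟩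
  simp [pFD, h0]

lemma pFD_continuous (hφ : ContDiff ℝ (⊤ : ℕ∞) φ) :
    Continuous fun p : V3 × V3 => pFD φ p.1 p.2 := by
  have h1 : Continuous (fderiv ℝ φ) := hφ.continuous_fderiv (by simp)
  exact (h1.comp continuous_id).clm_comp continuous_const

lemma norm_pFD_le (hφ : ContDiff ℝ (⊤ : ℕ∞) φ) (hsupp : HasCompactSupport φ)
    {C : ℝ} (hC : ∀ p, ‖fderiv ℝ φ p‖ ≤ C) (x v : V3) :
    ‖pFD φ x v‖ ≤ (Prod.snd '' tsupport φ).indicator (fun _ => C) v := by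
  by_cases hv : v ∈ Prod.snd '' tsupport φ
  · rw [Set.indicator_of_mem hv]
    have hinl : ‖(ContinuousLinearMap.inl ℝ V3 V3)‖ ≤ 1 := by
      refine ContinuousLinearMap.opNorm_le_bound _ zero_le_one (fun y => ?_)
      simp [Prod.norm_def]
    calc ‖pFD φ x v‖ ≤ ‖fderiv ℝ φ (x, v)‖ * ‖(ContinuousLinearMap.inl ℝ V3 V3)‖ :=
          ContinuousLinearMap.opNorm_comp_le _ _
      _ ≤ C * 1 := mul_le_mul (hC _) hinl (norm_nonneg _)
          ((norm_nonneg (fderiv ℝ φ (x,v))).trans (hC (x,v)))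
      _ = C := mul_one C
  · rw [Set.indicator_of_notMem hv, pFD_eq_zero_of_snd_not_mem hsupp hv x]
    simp

lemma bound_integrable (hsupp : HasCompactSupport φ) (C : ℝ) :
    Integrable ((Prod.snd '' tsupport φ).indicator (fun _ => C)) := by
  have hK : IsCompact (Prod.snd '' tsupport φ) := hsupp.image continuous_snd
  rw [integrable_indicator_iff hK.isClosed.measurableSet]
  exact integrableOn_const hK.measure_lt_top.ne

lemma hasFDerivAt_param (hφ : ContDiff ℝ (⊤ : ℕ∞) φ) (hsupp : HasCompactSupport φ) (x₀ : V3) :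
    HasFDerivAt (fun x => ∫ v, φ (x, v)) (∫ v, pFD φ x₀ v) x₀ := by
  obtain ⟨C, hC⟩ := (hsupp.fderiv (𝕜 := ℝ)).exists_bound_of_continuous
    (hφ.continuous_fderiv (by simp))
  refine hasFDerivAt_integral_of_dominated_of_fderiv_le (s := Metric.ball x₀ 1)
    (F := fun x v => φ (x, v)) (F' := fun x v => pFD φ x v)
    (bound := (Prod.snd '' tsupport φ).indicator (fun _ => C)) (Metric.ball_mem_nhds x₀ one_pos)
    (Filter.Eventually.of_forall fun x =>
      (hφ.continuous.comp (Continuous.prodMk_right x)).aestronglyMeasurable)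
    (slice_integrable hφ hsupp x₀)
    (((pFD_continuous hφ).comp (Continuous.prodMk_right x₀)).aestronglyMeasurable)
    (Filter.Eventually.of_forall fun v x _ => norm_pFD_le hφ hsupp hC x v)
    (bound_integrable hsupp C)
    (Filter.Eventually.of_forall fun v x _ => ?_)
  exact ((hφ.differentiable (by simp)).differentiableAt.hasFDerivAt).comp x
    (hasFDerivAt_prodMk_left x v)

lemma continuous_pFD_integral (hφ : ContDiff ℝ (⊤ : ℕ∞) φ) (hsupp : HasCompactSupport φ) :
    Continuous fun x => ∫ v, pFD φ x v := by
  obtain ⟨C, hC⟩ := (hsupp.fderiv (𝕜 := ℝ)).exists_bound_of_continuous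
    (hφ.continuous_fderiv (by simp))
  refine continuous_of_dominated
    (fun x => ((pFD_continuous hφ).comp (Continuous.prodMk_right x)).aestronglyMeasurable)
    (fun x => Filter.Eventually.of_forall fun v => norm_pFD_le hφ hsupp hC x v)
    (bound_integrable hsupp C)
    (Filter.Eventually.of_forall fun v => ?_)
  exact (pFD_continuous hφ).comp (Continuous.prodMk_left v)

lemma contDiff_one_param (hφ : ContDiff ℝ (⊤ : ℕ∞) φ) (hsupp : HasCompactSupport φ) :
    ContDiff ℝ 1 (fun x => ∫ v, φ (x, v)) := by
  rw [contDiff_one_iff_fderiv]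
  refine ⟨fun x => (hasFDerivAt_param hφ hsupp x).differentiableAt, ?_⟩
  have : (fderiv ℝ fun x => ∫ v, φ (x, v)) = fun x => ∫ v, pFD φ x v :=
    funext fun x => (hasFDerivAt_param hφ hsupp x).fderiv
  rw [this]
  exact continuous_pFD_integral hφ hsupp

lemma param_hasCompactSupport (hsupp : HasCompactSupport φ) :
    HasCompactSupport fun x => ∫ v, φ (x, v) := by
  refine HasCompactSupport.intro (hsupp.image continuous_fst) (fun x hx => ?_)
  have : ∀ v, φ (x, v) = 0 := by
    intro v
    by_contra h0
    exact hx ⟨(x, v), subset_tsupport _ (Function.mem_support.2 h0), rfl⟩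
  simp [this]

end Parametric

section MoreParam

variable {φ : V3 × V3 → ℝ}

lemma pd_param_continuous (hφ : ContDiff ℝ (⊤ : ℕ∞) φ) (hsupp : HasCompactSupport φ) (j : Fin 3) :
    Continuous (pd j fun x => ∫ v, φ (x, v)) := by
  have hfder : (fderiv ℝ fun x => ∫ v, φ (x, v)) = fun x => ∫ v, pFD φ x v :=
    funext fun x => (hasFDerivAt_param hφ hsupp x).fderiv
  have : (pd j fun x => ∫ v, φ (x, v)) = fun x => (∫ v, pFD φ x v) (Pi.single j 1) := by
    funext x
    rw [pd, hfder]
  rw [this]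
  exact (ContinuousLinearMap.apply ℝ ℝ (Pi.single j (1:ℝ))).continuous.comp
    (continuous_pFD_integral hφ hsupp)

lemma pd_param_hasCompactSupport (hsupp : HasCompactSupport φ) (j : Fin 3) :
    HasCompactSupport (pd j fun x => ∫ v, φ (x, v)) :=
  HasCompactSupport.intro (param_hasCompactSupport hsupp)
    (fun _ hx => pd_eq_zero_of_not_mem_tsupport hx j)

lemma ibp_param (hφ : ContDiff ℝ (⊤ : ℕ∞) φ) (hsupp : HasCompactSupport φ)
    (u : V3 → ℝ) (hu : ContDiff ℝ (⊤ : ℕ∞) u) (j : Fin 3) :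
    ∫ x, u x * pd j (fun y => ∫ v, φ (y, v)) x
      = - ∫ x, pd j u x * ∫ v, φ (x, v) := by
  set H : V3 → ℝ := fun y => ∫ v, φ (y, v) with hHdef
  have hH1 : ContDiff ℝ 1 H := contDiff_one_param hφ hsupp
  have hHsupp : HasCompactSupport H := param_hasCompactSupport hsupp
  have hpdcont : Continuous (pd j H) := pd_param_continuous hφ hsupp j
  have hpdsupp : HasCompactSupport (pd j H) := pd_param_hasCompactSupport hsupp j
  have hucont : Continuous u := hu.continuous
  have hpducont : Continuous (pd j u) := by
    have h : Continuous (fderiv ℝ u) := hu.continuous_fderiv (by simp)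
    exact (ContinuousLinearMap.apply ℝ ℝ (Pi.single j (1:ℝ))).continuous.comp h
  have hint1 : Integrable (fun x => u x * pd j H x) :=
    (hucont.mul hpdcont).integrable_of_hasCompactSupport hpdsupp.mul_left
  have hint2 : Integrable (fun x => pd j u x * H x) :=
    (hpducont.mul hH1.continuous).integrable_of_hasCompactSupport hHsupp.mul_left
  have hpt : ∀ x, pd j (fun y => u y * H y) x = u x * pd j H x + pd j u x * H x := by
    intro x
    rw [pd, fderiv_fun_mul (hu.differentiable (by simp) x) (hH1.differentiable one_ne_zero x)]
    simp only [ContinuousLinearMap.add_apply, ContinuousLinearMap.smul_apply, smul_eq_mul, pd]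
    ring
  have h0 : ∫ x, pd j (fun y => u y * H y) x = 0 :=
    integral_pd_eq_zero j _ ((hu.of_le (by simp)).mul hH1) hHsupp.mul_left
  have hsum : (∫ x, u x * pd j H x) + (∫ x, pd j u x * H x) = 0 := by
    rw [← integral_add hint1 hint2, ← h0]
    exact integral_congr_ae (Filter.Eventually.of_forall fun x => (hpt x).symm)
  linarith [hsum]

end MoreParam

section Smoothness

lemma smooth_pdx {g : V3 → V3 → ℝ} (hg : ContDiff ℝ (⊤ : ℕ∞) fun p : V3 × V3 => g p.1 p.2) (i : Fin 3) :
    ContDiff ℝ (⊤ : ℕ∞) fun p : V3 × V3 => pd i (fun y => g y p.2) p.1 := by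
  have h1 : ContDiff ℝ (⊤ : ℕ∞) fun p : V3 × V3 => fderiv ℝ (fun y => g y p.2) p.1 := by
    refine ContDiff.fderiv (f := fun (p : V3 × V3) (y : V3) => g y p.2) (g := fun p => p.1) (m := ((⊤ : ℕ∞) : WithTop ℕ∞))
      ?_ contDiff_fst (by exact_mod_cast le_top)
    exact hg.comp (contDiff_snd.prodMk (contDiff_snd.comp (contDiff_fst (E := V3 × V3) (F := V3))))
  simp only [pd]
  exact h1.clm_apply contDiff_const

lemma smooth_pdv {g : V3 → V3 → ℝ} (hg : ContDiff ℝ (⊤ : ℕ∞) fun p : V3 × V3 => g p.1 p.2) (i : Fin 3) :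
    ContDiff ℝ (⊤ : ℕ∞) fun p : V3 × V3 => pd i (fun w => g p.1 w) p.2 := by
  have h1 : ContDiff ℝ (⊤ : ℕ∞) fun p : V3 × V3 => fderiv ℝ (fun w => g p.1 w) p.2 := by
    refine ContDiff.fderiv (f := fun (p : V3 × V3) (w : V3) => g p.1 w) (g := fun p => p.2) (m := ((⊤ : ℕ∞) : WithTop ℕ∞))
      ?_ contDiff_snd (by exact_mod_cast le_top)
    exact hg.comp (((contDiff_fst (E := V3) (F := V3)).comp (contDiff_fst (E := V3 × V3) (F := V3))).prodMk contDiff_snd)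
  simp only [pd]
  exact h1.clm_apply contDiff_const

end Smoothness


set_option maxHeartbeats 2000000 in
/-- the diamond-operation identity
`∫∫ f (U·∂_x g + ((v·∇)U)·∂_v g) dv dx = ∫ U·F dx`, where
`F_i = ∫ f ∂_{x_i} g dv − Σ_j ∂_{x_j} ∫ f v_j ∂_{v_i} g dv`. -/
theorem diamond_fluid_component_identity
    (f g : V3 → V3 → ℝ) (U : V3 → V3)
    (hf : ContDiff ℝ (⊤ : ℕ∞) (fun p : V3 × V3 => f p.1 p.2))
    (hfsupp : HasCompactSupport (fun p : V3 × V3 => f p.1 p.2))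
    (hg : ContDiff ℝ (⊤ : ℕ∞) (fun p : V3 × V3 => g p.1 p.2))
    (hU : ContDiff ℝ (⊤ : ℕ∞) U) :
    (∫ x : V3, ∫ v : V3, f x v *
        (dot3 (U x) (fun i => pd i (fun y => g y v) x)
          + dot3 (fun i => dot3 v (fun j => pd j (fun y => U y i) x))
              (fun i => pd i (fun w => g x w) v)))
      = ∫ x : V3, dot3 (U x) (fun i =>
          (∫ v : V3, f x v * pd i (fun y => g y v) x)
            - ∑ j, pd j (fun y => ∫ v : V3, f y v * v j * pd i (fun w => g y w) v) x) := by
  classical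
  -- coordinate functions of U
  have hUi : ∀ i : Fin 3, ContDiff ℝ (⊤ : ℕ∞) fun y : V3 => U y i := fun i => contDiff_pi.1 hU i
  have hUicont : ∀ i : Fin 3, Continuous fun y : V3 => U y i := fun i => (hUi i).continuous
  have hpdUcont : ∀ i j : Fin 3, Continuous fun x : V3 => pd j (fun y => U y i) x := by
    intro i j
    have h : Continuous (fderiv ℝ fun y : V3 => U y i) := (hUi i).continuous_fderiv (by simp)
    exact (ContinuousLinearMap.apply ℝ ℝ (Pi.single j (1:ℝ))).continuous.comp h
  -- the integrand families
  have hφA : ∀ i : Fin 3,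
      ContDiff ℝ (⊤ : ℕ∞) (fun p : V3 × V3 => f p.1 p.2 * pd i (fun y => g y p.2) p.1) :=
    fun i => hf.mul (smooth_pdx hg i)
  have hφAsupp : ∀ i : Fin 3,
      HasCompactSupport (fun p : V3 × V3 => f p.1 p.2 * pd i (fun y => g y p.2) p.1) :=
    fun i => hfsupp.mul_right
  have hφB : ∀ i j : Fin 3,
      ContDiff ℝ (⊤ : ℕ∞) (fun p : V3 × V3 => f p.1 p.2 * p.2 j * pd i (fun w => g p.1 w) p.2) :=
    fun i j => (hf.mul (contDiff_pi.1 contDiff_snd j)).mul (smooth_pdv hg i)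
  have hφBsupp : ∀ i j : Fin 3,
      HasCompactSupport (fun p : V3 × V3 => f p.1 p.2 * p.2 j * pd i (fun w => g p.1 w) p.2) :=
    fun i j => hfsupp.mul_right.mul_right
  -- slice integrability in v
  have hsliceA : ∀ (i : Fin 3) (x : V3),
      Integrable fun v => f x v * pd i (fun y => g y v) x :=
    fun i x => slice_integrable (hφA i) (hφAsupp i) x
  have hsliceB : ∀ (i j : Fin 3) (x : V3),
      Integrable fun v => f x v * v j * pd i (fun w => g x w) v :=
    fun i j x => slice_integrable (hφB i j) (hφBsupp i j) x
  -- continuity / support / integrability of the x-functions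
  have hcontA : ∀ i : Fin 3, Continuous fun x => ∫ v, f x v * pd i (fun y => g y v) x :=
    fun i => (contDiff_one_param (hφA i) (hφAsupp i)).continuous
  have hsuppA : ∀ i : Fin 3, HasCompactSupport fun x => ∫ v, f x v * pd i (fun y => g y v) x :=
    fun i => param_hasCompactSupport (hφAsupp i)
  have hcontB : ∀ i j : Fin 3,
      Continuous fun x => ∫ v, f x v * v j * pd i (fun w => g x w) v :=
    fun i j => (contDiff_one_param (hφB i j) (hφBsupp i j)).continuous
  have hsuppB : ∀ i j : Fin 3,
      HasCompactSupport fun x => ∫ v, f x v * v j * pd i (fun w => g x w) v :=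
    fun i j => param_hasCompactSupport (hφBsupp i j)
  have hpdBcont : ∀ i j : Fin 3,
      Continuous (pd j fun x => ∫ v, f x v * v j * pd i (fun w => g x w) v) :=
    fun i j => pd_param_continuous (hφB i j) (hφBsupp i j) j
  have hpdBsupp : ∀ i j : Fin 3,
      HasCompactSupport (pd j fun x => ∫ v, f x v * v j * pd i (fun w => g x w) v) :=
    fun i j => pd_param_hasCompactSupport (hφBsupp i j) j
  have hIntUA : ∀ i : Fin 3,
      Integrable fun x => U x i * ∫ v, f x v * pd i (fun y => g y v) x :=
    fun i => ((hUicont i).mul (hcontA i)).integrable_of_hasCompactSupport (hsuppA i).mul_left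
  have hIntUpdB : ∀ i j : Fin 3,
      Integrable fun x =>
        U x i * pd j (fun y => ∫ v, f y v * v j * pd i (fun w => g y w) v) x :=
    fun i j => ((hUicont i).mul (hpdBcont i j)).integrable_of_hasCompactSupport
      (hpdBsupp i j).mul_left
  have hIntpdUB : ∀ i j : Fin 3,
      Integrable fun x =>
        pd j (fun y => U y i) x * ∫ v, f x v * v j * pd i (fun w => g x w) v :=
    fun i j => ((hpdUcont i j).mul (hcontB i j)).integrable_of_hasCompactSupport
      (hsuppB i j).mul_left
  -- pointwise identity for the inner integrand
  have hpt : ∀ x v, f x v *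
        (dot3 (U x) (fun i => pd i (fun y => g y v) x)
          + dot3 (fun i => dot3 v (fun j => pd j (fun y => U y i) x))
              (fun i => pd i (fun w => g x w) v))
      = (∑ i, U x i * (f x v * pd i (fun y => g y v) x))
        + ∑ i, ∑ j, pd j (fun y => U y i) x * (f x v * v j * pd i (fun w => g x w) v) := by
    intro x v
    simp only [dot3, mul_add, Finset.mul_sum, Finset.sum_mul]
    refine congrArg₂ (· + ·) (Finset.sum_congr rfl fun i _ => by ring)
      (Finset.sum_congr rfl fun i _ => ?_)
    exact Finset.sum_congr rfl fun j _ => by ring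
  -- the inner integral, rewritten
  have hinner : ∀ x, (∫ v, f x v *
        (dot3 (U x) (fun i => pd i (fun y => g y v) x)
          + dot3 (fun i => dot3 v (fun j => pd j (fun y => U y i) x))
              (fun i => pd i (fun w => g x w) v)))
      = (∑ i, U x i * ∫ v, f x v * pd i (fun y => g y v) x)
        + ∑ i, ∑ j, pd j (fun y => U y i) x * ∫ v, f x v * v j * pd i (fun w => g x w) v := by
    intro x
    rw [integral_congr_ae (Filter.Eventually.of_forall (hpt x))]
    rw [integral_add
        (integrable_finset_sum _ fun i _ => (hsliceA i x).const_mul _)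
        (integrable_finset_sum _ fun i _ =>
          integrable_finset_sum _ fun j _ => (hsliceB i j x).const_mul _),
      integral_finset_sum _ (fun i _ => (hsliceA i x).const_mul _),
      integral_finset_sum _ (fun i _ =>
        integrable_finset_sum _ fun j _ => (hsliceB i j x).const_mul _)]
    refine congrArg₂ (· + ·) (Finset.sum_congr rfl fun i _ => integral_const_mul _ _)
      (Finset.sum_congr rfl fun i _ => ?_)
    rw [integral_finset_sum _ (fun j _ => (hsliceB i j x).const_mul _)]
    exact Finset.sum_congr rfl fun j _ => integral_const_mul _ _
  -- pointwise identity for the RHS integrand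
  have hR1 : ∀ x, dot3 (U x) (fun i =>
        (∫ v : V3, f x v * pd i (fun y => g y v) x)
          - ∑ j, pd j (fun y => ∫ v : V3, f y v * v j * pd i (fun w => g y w) v) x)
      = (∑ i, U x i * ∫ v, f x v * pd i (fun y => g y v) x)
        - ∑ i, ∑ j, U x i * pd j (fun y => ∫ v, f y v * v j * pd i (fun w => g y w) v) x := by
    intro x
    simp only [dot3, mul_sub, Finset.mul_sum, Finset.sum_sub_distrib]
  -- integration by parts in x
  have hibp : ∀ i j : Fin 3,
      ∫ x, U x i * pd j (fun y => ∫ v, f y v * v j * pd i (fun w => g y w) v) x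
        = - ∫ x, pd j (fun y => U y i) x * ∫ v, f x v * v j * pd i (fun w => g x w) v :=
    fun i j => ibp_param (hφB i j) (hφBsupp i j) _ (hUi i) j
  calc (∫ x : V3, ∫ v : V3, f x v *
        (dot3 (U x) (fun i => pd i (fun y => g y v) x)
          + dot3 (fun i => dot3 v (fun j => pd j (fun y => U y i) x))
              (fun i => pd i (fun w => g x w) v)))
      = ∫ x, ((∑ i, U x i * ∫ v, f x v * pd i (fun y => g y v) x)
        + ∑ i, ∑ j, pd j (fun y => U y i) x
            * ∫ v, f x v * v j * pd i (fun w => g x w) v) :=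
        integral_congr_ae (Filter.Eventually.of_forall hinner)
    _ = (∑ i, ∫ x, U x i * ∫ v, f x v * pd i (fun y => g y v) x)
        + ∑ i, ∑ j, ∫ x, pd j (fun y => U y i) x
            * ∫ v, f x v * v j * pd i (fun w => g x w) v := by
        rw [integral_add (integrable_finset_sum _ fun i _ => hIntUA i)
          (integrable_finset_sum _ fun i _ =>
            integrable_finset_sum _ fun j _ => hIntpdUB i j),
          integral_finset_sum _ (fun i _ => hIntUA i),
          integral_finset_sum _ (fun i _ =>
            integrable_finset_sum _ fun j _ => hIntpdUB i j)]
        refine congrArg₂ (· + ·) rfl (Finset.sum_congr rfl fun i _ => ?_)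
        exact integral_finset_sum _ (fun j _ => hIntpdUB i j)
    _ = (∑ i, ∫ x, U x i * ∫ v, f x v * pd i (fun y => g y v) x)
        - ∑ i, ∑ j, ∫ x, U x i
            * pd j (fun y => ∫ v, f y v * v j * pd i (fun w => g y w) v) x := by
        rw [sub_eq_add_neg]
        refine congrArg₂ (· + ·) rfl ?_
        rw [← Finset.sum_neg_distrib]
        refine Finset.sum_congr rfl fun i _ => ?_
        rw [← Finset.sum_neg_distrib]
        refine Finset.sum_congr rfl fun j _ => ?_
        rw [hibp i j, neg_neg]
    _ = ∫ x, ((∑ i, U x i * ∫ v, f x v * pd i (fun y => g y v) x)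
        - ∑ i, ∑ j, U x i
            * pd j (fun y => ∫ v, f y v * v j * pd i (fun w => g y w) v) x) := by
        rw [integral_sub (integrable_finset_sum _ fun i _ => hIntUA i)
          (integrable_finset_sum _ fun i _ =>
            integrable_finset_sum _ fun j _ => hIntUpdB i j),
          integral_finset_sum _ (fun i _ => hIntUA i),
          integral_finset_sum _ (fun i _ =>
            integrable_finset_sum _ fun j _ => hIntUpdB i j)]
        refine congrArg₂ (· - ·) rfl (Finset.sum_congr rfl fun i _ => ?_).symm
        exact integral_finset_sum _ (fun j _ => hIntUpdB i j)
    _ = ∫ x : V3, dot3 (U x) (fun i =>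
          (∫ v : V3, f x v * pd i (fun y => g y v) x)
            - ∑ j, pd j (fun y => ∫ v : V3, f y v * v j * pd i (fun w => g y w) v) x) :=
        (integral_congr_ae (Filter.Eventually.of_forall hR1)).symm
end
end

section
/- Let m, q ∈ ℝ, let A : ℝ³ → ℝ³ be smooth with B := ∇×A, and let f : ℝ³ × ℝ³ → ℝ be smooth and compactly supported. Set g(x,v) = (m/2)|v|² + q v·A(x), n(x) = ∫ f(x,v) dv, K(x) = ∫ v f(x,v) dv, and ℙ_{jk}(x) = ∫ v_j v_k f(x,v) dv. Then for every x ∈ ℝ³ and every i, ∫ f ∂_{x_i} g dv − Σ_j ∂_{x_j} ∫ f v_j ∂_{v_i} g dv = q (K×B)_i − q (∇·K) A_i − m Σ_j ∂_{x_j} ℙ_{ji}. -/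
open MeasureTheory

noncomputable section

lemma pd_add {g h : V3 → ℝ} {x : V3} (i : Fin 3) (hg : DifferentiableAt ℝ g x)
    (hh : DifferentiableAt ℝ h x) :
    pd i (fun y => g y + h y) x = pd i g x + pd i h x := by
  simp [pd, fderiv_fun_add hg hh]

lemma pd_const_mul {g : V3 → ℝ} {x : V3} (i : Fin 3) (c : ℝ) (hg : DifferentiableAt ℝ g x) :
    pd i (fun y => c * g y) x = c * pd i g x := by
  simp [pd, fderiv_const_mul hg]

lemma pd_const_add {g : V3 → ℝ} {x : V3} (i : Fin 3) (c : ℝ) :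
    pd i (fun y => c + g y) x = pd i g x := by
  simp [pd, fderiv_const_add]

lemma pd_mul {g h : V3 → ℝ} {x : V3} (i : Fin 3) (hg : DifferentiableAt ℝ g x)
    (hh : DifferentiableAt ℝ h x) :
    pd i (fun y => g y * h y) x = pd i g x * h x + g x * pd i h x := by
  simp [pd, fderiv_fun_mul hg hh]; ring

lemma pd_sum {ι : Type*} (s : Finset ι) {g : ι → V3 → ℝ} {x : V3} (i : Fin 3)
    (hg : ∀ k ∈ s, DifferentiableAt ℝ (g k) x) :
    pd i (fun y => ∑ k ∈ s, g k y) x = ∑ k ∈ s, pd i (g k) x := by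
  simp [pd, fderiv_fun_sum hg]

lemma pd_coord (i k : Fin 3) (v : V3) : pd i (fun w => w k) v = if k = i then 1 else 0 := by
  have : (fun w : V3 => w k) = (ContinuousLinearMap.proj k : V3 →L[ℝ] ℝ) := rfl
  rw [pd, this, ContinuousLinearMap.fderiv]
  simp [Pi.single_apply]

lemma pd_g_v (m q : ℝ) (a : V3) (i : Fin 3) (v : V3) :
    pd i (fun w => m / 2 * dot3 w w + q * dot3 w a) v = m * v i + q * a i := by
  have hd : ∀ k : Fin 3, DifferentiableAt ℝ (fun w : V3 => w k) v := by
    intro k; exact (ContinuousLinearMap.proj k : V3 →L[ℝ] ℝ).differentiableAt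
  have h1 : DifferentiableAt ℝ (fun w : V3 => dot3 w w) v := by
    unfold dot3; exact DifferentiableAt.fun_sum fun k _ => (hd k).fun_mul (hd k)
  have h2 : DifferentiableAt ℝ (fun w : V3 => dot3 w a) v := by
    unfold dot3; exact DifferentiableAt.fun_sum fun k _ => (hd k).mul_const _
  rw [pd_add i ((h1.const_mul _)) (h2.const_mul _), pd_const_mul i _ h1, pd_const_mul i _ h2]
  unfold dot3
  rw [pd_sum _ i (fun k _ => (hd k).fun_mul (hd k)),
      pd_sum _ i (fun k _ => (hd k).mul_const _)]
  have e1 : ∀ k : Fin 3, pd i (fun w : V3 => w k * w k) v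
      = (if k = i then 1 else 0) * v k + v k * (if k = i then 1 else 0) := by
    intro k; rw [pd_mul i (hd k) (hd k), pd_coord]
  have e2 : ∀ k : Fin 3, pd i (fun w : V3 => w k * a k) v
      = (if k = i then 1 else 0) * a k := by
    intro k
    have := pd_mul i (hd k) (differentiableAt_const (a k) : DifferentiableAt ℝ (fun _ : V3 => a k) v)
    rw [this, pd_coord]
    simp [pd]
  simp only [e1, e2, Fin.sum_univ_three]
  fin_cases i <;> simp [Fin.ext_iff] <;> ring

lemma pd_g_x (m q c : ℝ) (A : V3 → V3) (hA : ContDiff ℝ (⊤ : ℕ∞) A) (v x : V3) (i : Fin 3) :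
    pd i (fun y => c + q * dot3 v (A y)) x
      = q * ∑ k, v k * pd i (fun y => A y k) x := by
  have hAk : ∀ k : Fin 3, DifferentiableAt ℝ (fun y => A y k) x := fun k =>
    differentiableAt_pi.1 (hA.differentiable (by simp) x) k
  have h2 : DifferentiableAt ℝ (fun y : V3 => dot3 v (A y)) x := by
    unfold dot3; exact DifferentiableAt.fun_sum fun k _ => (hAk k).const_mul _
  rw [pd_const_add i c, pd_const_mul i _ h2]
  unfold dot3
  rw [pd_sum _ i (fun k _ => (hAk k).const_mul _)]
  congr 1
  exact Finset.sum_congr rfl fun k _ => pd_const_mul i _ (hAk k)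

-- isometry embedding v ↦ (x, v)
lemma integrable_slice (h : V3 × V3 → ℝ) (hc : Continuous h) (hs : HasCompactSupport h)
    (x : V3) : Integrable (fun v => h (x, v)) := by
  have hiso : Isometry (fun v : V3 => (x, v)) := by
    apply Isometry.of_dist_eq
    intro a b
    simp [Prod.dist_eq, dist_nonneg]
  have hcs : HasCompactSupport (fun v => h (x, v)) :=
    hs.comp_isClosedEmbedding hiso.isClosedEmbedding
  exact (hc.comp (by fun_prop)).integrable_of_hasCompactSupport hcs

lemma differentiableAt_param_integral
    (h : V3 × V3 → ℝ) (hsm : ContDiff ℝ (⊤ : ℕ∞) h) (hsp : HasCompactSupport h) (x : V3) :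
    DifferentiableAt ℝ (fun y => ∫ v : V3, h (y, v)) x := by
  obtain ⟨C, hC⟩ := (hsm.continuous_fderiv (by simp)).bounded_above_of_compact_support (hsp.fderiv (𝕜 := ℝ))
  set S : Set V3 := Prod.snd '' tsupport h with hS
  have hScomp : IsCompact S := (hsp : IsCompact (tsupport h)).image continuous_snd
  set F' : V3 → V3 → (V3 →L[ℝ] ℝ) := fun y v =>
    (fderiv ℝ h (y, v)).comp (ContinuousLinearMap.inl ℝ V3 V3) with hF'
  have hbound_int : Integrable (S.indicator fun _ : V3 => C) := by
    rw [integrable_indicator_iff hScomp.isClosed.measurableSet]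
    exact integrableOn_const hScomp.measure_lt_top.ne
  have key : HasFDerivAt (fun y => ∫ v : V3, h (y, v)) (∫ v : V3, F' x v) x := by
    apply hasFDerivAt_integral_of_dominated_of_fderiv_le (𝕜 := ℝ) (H := V3) (E := ℝ)
      (μ := volume) (F := fun y v => h (y, v)) (F' := F') (x₀ := x)
      (bound := S.indicator fun _ => C) (s := Metric.ball x 1) (Metric.ball_mem_nhds x one_pos)
    · filter_upwards with y
      exact (hsm.continuous.comp (by fun_prop)).aestronglyMeasurable
    · exact integrable_slice h hsm.continuous hsp x
    · exact (((hsm.continuous_fderiv (by simp)).comp (by fun_prop)).clm_comp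
        continuous_const).aestronglyMeasurable
    · filter_upwards with v
      intro y _
      by_cases hv : v ∈ S
      · rw [Set.indicator_of_mem hv]
        calc ‖F' y v‖ ≤ ‖fderiv ℝ h (y, v)‖ * ‖ContinuousLinearMap.inl ℝ V3 V3‖ :=
              ContinuousLinearMap.opNorm_comp_le _ _
          _ ≤ C * 1 := by
              apply mul_le_mul (hC _) ?_ (norm_nonneg _) ((norm_nonneg _).trans (hC (y, v)))
              apply ContinuousLinearMap.opNorm_le_bound _ zero_le_one
              intro w; simp [Prod.norm_def]
          _ = C := mul_one C
      · rw [Set.indicator_of_notMem hv]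
        have : (y, v) ∉ tsupport h := fun hmem => hv ⟨(y, v), hmem, rfl⟩
        have h0 : fderiv ℝ h (y, v) = 0 := by
          by_contra h0
          exact this (support_fderiv_subset ℝ (h0 : fderiv ℝ h (y, v) ≠ 0))
        simp [hF', h0]
    · exact hbound_int
    · filter_upwards with v
      intro y _
      exact ((hsm.differentiable (by simp) (y, v)).hasFDerivAt).comp y
        (hasFDerivAt_prodMk_left y v)
  exact key.differentiableAt

/-- explicit evaluation of the diamond term for
`g(x,v) = (m/2)|v|² + q v·A(x)`:
`∫ f ∂_{x_i} g dv − Σ_j ∂_{x_j} ∫ f v_j ∂_{v_i} g dv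
  = q (K×B)_i − q (∇·K) A_i − m Σ_j ∂_{x_j} ℙ_{ji}`,
where `n = ∫ f dv`, `K = ∫ v f dv`, `ℙ_{jk} = ∫ v_j v_k f dv`, `B = ∇×A`. -/
theorem diamond_term_explicit_evaluation
    (m q : ℝ) (A : V3 → V3) (hA : ContDiff ℝ (⊤ : ℕ∞) A)
    (f : V3 → V3 → ℝ)
    (hf : ContDiff ℝ (⊤ : ℕ∞) (fun p : V3 × V3 => f p.1 p.2))
    (hfsupp : HasCompactSupport (fun p : V3 × V3 => f p.1 p.2)) :
    ∀ (x : V3) (i : Fin 3),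
      (∫ v : V3, f x v * pd i (fun y => m / 2 * dot3 v v + q * dot3 v (A y)) x)
          - ∑ j, pd j (fun y =>
              ∫ v : V3, f y v * v j * pd i (fun w => m / 2 * dot3 w w + q * dot3 w (A y)) v) x
        = q * cross3 (fun j => ∫ v : V3, v j * f x v) (vcurl A x) i
            - q * (∑ j, pd j (fun y => ∫ v : V3, v j * f y v) x) * A x i
            - m * ∑ j, pd j (fun y => ∫ v : V3, v j * v i * f y v) x := by
  intro x i
  have hproj : ∀ j : Fin 3, ContDiff ℝ (⊤ : ℕ∞) (fun p : V3 × V3 => p.2 j) := fun j =>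
    (ContinuousLinearMap.proj j : V3 →L[ℝ] ℝ).contDiff.comp contDiff_snd
  have hKsm : ∀ j : Fin 3, ContDiff ℝ (⊤ : ℕ∞) (fun p : V3 × V3 => p.2 j * f p.1 p.2) := fun j =>
    (hproj j).mul hf
  have hKsp : ∀ j : Fin 3, HasCompactSupport (fun p : V3 × V3 => p.2 j * f p.1 p.2) := fun j =>
    hfsupp.mul_left
  have hPsm : ∀ j : Fin 3, ContDiff ℝ (⊤ : ℕ∞) (fun p : V3 × V3 => p.2 j * p.2 i * f p.1 p.2) :=
    fun j => ((hproj j).mul (hproj i)).mul hf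
  have hPsp : ∀ j : Fin 3, HasCompactSupport (fun p : V3 × V3 => p.2 j * p.2 i * f p.1 p.2) := by
    intro j
    have : (fun p : V3 × V3 => p.2 j * p.2 i * f p.1 p.2)
        = fun p : V3 × V3 => (p.2 j * p.2 i) * f p.1 p.2 := rfl
    rw [this]; exact hfsupp.mul_left
  have hKint : ∀ (y : V3) (j : Fin 3), Integrable (fun v : V3 => v j * f y v) := fun y j =>
    integrable_slice _ (hKsm j).continuous (hKsp j) y
  have hPint : ∀ (y : V3) (j : Fin 3), Integrable (fun v : V3 => v j * v i * f y v) := fun y j =>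
    integrable_slice _ (hPsm j).continuous (hPsp j) y
  have hKdiff : ∀ j : Fin 3, DifferentiableAt ℝ (fun y => ∫ v : V3, v j * f y v) x := fun j =>
    differentiableAt_param_integral _ (hKsm j) (hKsp j) x
  have hPdiff : ∀ j : Fin 3, DifferentiableAt ℝ (fun y => ∫ v : V3, v j * v i * f y v) x :=
    fun j => differentiableAt_param_integral _ (hPsm j) (hPsp j) x
  have hAk : ∀ k : Fin 3, DifferentiableAt ℝ (fun y => A y k) x := fun k =>
    differentiableAt_pi.1 (hA.differentiable (by simp) x) k
  -- Step 1
  have e1 : ∀ v : V3, f x v * pd i (fun y => m / 2 * dot3 v v + q * dot3 v (A y)) x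
      = ∑ k, (q * pd i (fun y => A y k) x) * (v k * f x v) := by
    intro v
    rw [pd_g_x m q _ A hA v x i]
    simp only [Finset.mul_sum]
    exact Finset.sum_congr rfl fun k _ => by ring
  have h1 : (∫ v : V3, f x v * pd i (fun y => m / 2 * dot3 v v + q * dot3 v (A y)) x)
      = ∑ k, (q * pd i (fun y => A y k) x) * ∫ v : V3, v k * f x v := by
    simp only [e1]
    rw [integral_finset_sum _ (fun k _ => (hKint x k).const_mul _)]
    exact Finset.sum_congr rfl fun k _ => integral_const_mul _ _
  -- Step 2
  have h2 : ∀ j : Fin 3,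
      pd j (fun y =>
          ∫ v : V3, f y v * v j * pd i (fun w => m / 2 * dot3 w w + q * dot3 w (A y)) v) x
      = m * pd j (fun y => ∫ v : V3, v j * v i * f y v) x
        + q * (pd j (fun y => A y i) x * (∫ v : V3, v j * f x v)
               + A x i * pd j (fun y => ∫ v : V3, v j * f y v) x) := by
    intro j
    have e2 : ∀ y : V3,
        (∫ v : V3, f y v * v j * pd i (fun w => m / 2 * dot3 w w + q * dot3 w (A y)) v)
        = m * (∫ v : V3, v j * v i * f y v) + q * (A y i * ∫ v : V3, v j * f y v) := by
      intro y
      have e3 : ∀ v : V3, f y v * v j * pd i (fun w => m / 2 * dot3 w w + q * dot3 w (A y)) v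
          = m * (v j * v i * f y v) + (q * A y i) * (v j * f y v) := by
        intro v; rw [pd_g_v m q (A y) i v]; ring
      simp only [e3]
      rw [integral_add ((hPint y j).const_mul m) ((hKint y j).const_mul _),
        integral_const_mul, integral_const_mul]
      ring
    rw [show (fun y => ∫ v : V3,
          f y v * v j * pd i (fun w => m / 2 * dot3 w w + q * dot3 w (A y)) v)
        = fun y => m * (∫ v : V3, v j * v i * f y v) + q * (A y i * ∫ v : V3, v j * f y v)
        from funext e2]
    rw [pd_add j ((hPdiff j).const_mul m) (((hAk i).fun_mul (hKdiff j)).const_mul q),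
      pd_const_mul j m (hPdiff j), pd_const_mul j q ((hAk i).fun_mul (hKdiff j)),
      pd_mul j (hAk i) (hKdiff j)]
  rw [h1]
  simp only [h2]
  simp only [Finset.sum_add_distrib, Finset.mul_sum, Finset.sum_sub_distrib]
  fin_cases i <;>
    simp [cross3, vcurl, Fin.sum_univ_three, dot3] <;>
    ring
end
end

section
/- Let ρ > 0, U, A : ℝ³ × ℝ → ℝ³ and Φ : ℝ³ × ℝ → ℝ be smooth, set E = −∇Φ − ∂_t A and B = ∇×A, let a ∈ ℝ, and suppose the charged-fluid momentum and continuity equations hold: ∂_t U + (U·∇)U = a(E + U×B) − ρ⁻¹∇p with p = ρ² 𝒰'(ρ), and ∂_t ρ + ∇·(ρU) = 0. Let γ : ℝ × ℝ → ℝ³ be a smooth loop advected by U. Then the circulation ∫₀¹ (U + a A)(γ(t,s),t)·∂_s γ(t,s) ds is constant in time. -/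
open MeasureTheory

noncomputable section

namespace KelvinAux

lemma v3_decomp (v : V3) (w : ℝ) :
    ((v, w) : V3 × ℝ) = (∑ j : Fin 3, v j • ((Pi.single j 1 : V3), (0:ℝ))) + w • ((0:V3), (1:ℝ)) := by
  apply Prod.ext
  · simp [Prod.fst_sum, ← Pi.single_smul, smul_eq_mul, Finset.univ_sum_single]
  · simp [Prod.snd_sum]

lemma smul_pair (r : ℝ) (u : V3) : ((r • u, (0:ℝ)) : V3 × ℝ) = r • ((u, (0:ℝ)) : V3 × ℝ) := by
  ext <;> simp

lemma clm_decomp (L : (V3 × ℝ) →L[ℝ] ℝ) (v : V3) (w : ℝ) :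
    L (v, w) = (∑ j, v j * L (Pi.single j 1, 0)) + w * L ((0:V3), (1:ℝ)) := by
  conv_lhs => rw [v3_decomp v w]
  rw [map_add, map_sum, _root_.map_smul]
  simp only [smul_eq_mul]
  congr 1
  refine Finset.sum_congr rfl fun j _ => ?_
  rw [_root_.map_smul, smul_eq_mul]

/-- partial space derivative of a scalar field on `V3 × ℝ`. -/
def pdP (F : V3 × ℝ → ℝ) (x : V3) (t : ℝ) (j : Fin 3) : ℝ :=
  fderiv ℝ F (x, t) (Pi.single j 1, 0)

/-- time derivative of a scalar field on `V3 × ℝ`. -/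
def tdP (F : V3 × ℝ → ℝ) (x : V3) (t : ℝ) : ℝ :=
  fderiv ℝ F (x, t) ((0:V3), (1:ℝ))

lemma chainP {F : V3 × ℝ → ℝ} (hF : ContDiff ℝ (⊤ : ℕ∞) F) {c : ℝ → V3} {e : ℝ → ℝ}
    {v : V3} {w s : ℝ} (hc : HasDerivAt c v s) (he : HasDerivAt e w s) :
    HasDerivAt (fun τ => F (c τ, e τ))
      ((∑ j, v j * pdP F (c s) (e s) j) + w * tdP F (c s) (e s)) s := by
  have hf' := (hF.differentiable (by simp) (c s, e s)).hasFDerivAt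
  have h := hf'.comp_hasDerivAt s (hc.prodMk he)
  have hval : (fderiv ℝ F (c s, e s)) (v, w)
      = (∑ j, v j * pdP F (c s) (e s) j) + w * tdP F (c s) (e s) :=
    clm_decomp (fderiv ℝ F (c s, e s)) v w
  rw [← hval]
  simpa [Function.comp_def] using h

lemma hasDerivAt_slice_t {F : V3 × ℝ → ℝ} (hF : ContDiff ℝ (⊤ : ℕ∞) F) (x : V3) (t : ℝ) :
    HasDerivAt (fun τ => F (x, τ)) (tdP F x t) t := by
  simpa using chainP hF (hasDerivAt_const t x) (hasDerivAt_id t)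

lemma td_slice {F : V3 × ℝ → ℝ} (hF : ContDiff ℝ (⊤ : ℕ∞) F) (x : V3) (t : ℝ) :
    deriv (fun τ => F (x, τ)) t = tdP F x t :=
  (hasDerivAt_slice_t hF x t).deriv

lemma hasDerivAt_slice_s {F : V3 × ℝ → ℝ} (hF : ContDiff ℝ (⊤ : ℕ∞) F) {c : ℝ → V3}
    {v : V3} {s : ℝ} (t : ℝ) (hc : HasDerivAt c v s) :
    HasDerivAt (fun σ => F (c σ, t)) (∑ j, v j * pdP F (c s) t j) s := by
  simpa using chainP hF hc (hasDerivAt_const s t)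

lemma pd_slice {F : V3 × ℝ → ℝ} (hF : ContDiff ℝ (⊤ : ℕ∞) F) (x : V3) (t : ℝ) (j : Fin 3) :
    pd j (fun y => F (y, t)) x = pdP F x t j := by
  have h : HasFDerivAt (fun y : V3 => F (y, t))
      ((fderiv ℝ F (x, t)).comp (ContinuousLinearMap.inl ℝ V3 ℝ)) x :=
    ((hF.differentiable (by simp) (x, t)).hasFDerivAt).comp x (hasFDerivAt_prodMk_left x t)
  rw [pd, h.fderiv]
  simp [pdP]

lemma pd_comp {g : V3 → ℝ} {q : ℝ → ℝ} {q' : ℝ} {x : V3} {L : V3 →L[ℝ] ℝ}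
    (hg : HasFDerivAt g L x) (hq : HasDerivAt q q' (g x)) (i : Fin 3) :
    pd i (fun y => q (g y)) x = q' * L (Pi.single i 1) := by
  have h := hq.comp_hasFDerivAt x hg
  rw [pd, (by exact h.fderiv : fderiv ℝ (fun y => q (g y)) x = q' • L)]
  simp

lemma continuous_pdP {F : V3 × ℝ → ℝ} (hF : ContDiff ℝ (⊤ : ℕ∞) F) (j : Fin 3) :
    Continuous (fun p : V3 × ℝ => pdP F p.1 p.2 j) :=
  (hF.continuous_fderiv (by simp)).clm_apply continuous_const

lemma continuous_tdP {F : V3 × ℝ → ℝ} (hF : ContDiff ℝ (⊤ : ℕ∞) F) :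
    Continuous (fun p : V3 × ℝ => tdP F p.1 p.2) :=
  (hF.continuous_fderiv (by simp)).clm_apply continuous_const

end KelvinAux


namespace KelvinAux

def Gs (γ : ℝ → ℝ → V3) (t s : ℝ) : V3 :=
  fderiv ℝ (fun p : ℝ × ℝ => γ p.1 p.2) (t, s) ((0:ℝ), (1:ℝ))

abbrev cf (W : V3 → ℝ → V3) (i : Fin 3) : V3 × ℝ → ℝ := fun p => W p.1 p.2 i
abbrev sf (W : V3 → ℝ → ℝ) : V3 × ℝ → ℝ := fun p => W p.1 p.2

def hde (𝒰 : ℝ → ℝ) (r : ℝ) : ℝ := 2 * deriv 𝒰 r + r * deriv (deriv 𝒰) r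

def ffun (a : ℝ) (U A : V3 → ℝ → V3) (γ : ℝ → ℝ → V3) (t s : ℝ) : ℝ :=
  ∑ i, (U (γ t s) t i + a * A (γ t s) t i) * Gs γ t s i

def gfun (a : ℝ) (𝒰 : ℝ → ℝ) (ρ : V3 → ℝ → ℝ) (U A : V3 → ℝ → V3) (Φ : V3 → ℝ → ℝ)
    (γ : ℝ → ℝ → V3) (t s : ℝ) : ℝ :=
  a * (∑ i, U (γ t s) t i * A (γ t s) t i) + (∑ i, U (γ t s) t i ^ 2) / 2
    - a * Φ (γ t s) t
    - (𝒰 (ρ (γ t s) t) + ρ (γ t s) t * deriv 𝒰 (ρ (γ t s) t))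

def Tint (a : ℝ) (𝒰 : ℝ → ℝ) (ρ : V3 → ℝ → ℝ) (U A : V3 → ℝ → V3) (Φ : V3 → ℝ → ℝ)
    (γ : ℝ → ℝ → V3) (t s : ℝ) : ℝ :=
  ∑ j, Gs γ t s j *
    ( a * (∑ i, (pdP (cf U i) (γ t s) t j * A (γ t s) t i
          + U (γ t s) t i * pdP (cf A i) (γ t s) t j))
      + (∑ i, U (γ t s) t i * pdP (cf U i) (γ t s) t j)
      - a * pdP (sf Φ) (γ t s) t j
      - hde 𝒰 (ρ (γ t s) t) * pdP (sf ρ) (γ t s) t j )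

lemma hasDerivAt_gamma_s {γ : ℝ → ℝ → V3} (hγ : ContDiff ℝ (⊤ : ℕ∞) (fun p : ℝ × ℝ => γ p.1 p.2))
    (t s : ℝ) : HasDerivAt (fun σ => γ t σ) (Gs γ t s) s := by
  have h := ((hγ.differentiable (by simp) (t, s)).hasFDerivAt).comp_hasDerivAt s
    ((hasDerivAt_const s t).prodMk (hasDerivAt_id s))
  simpa [Function.comp_def, Gs] using h

lemma hasDerivAt_gamma_t {γ : ℝ → ℝ → V3} (hγ : ContDiff ℝ (⊤ : ℕ∞) (fun p : ℝ × ℝ => γ p.1 p.2))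
    (t s : ℝ) : HasDerivAt (fun τ => γ τ s)
      (fderiv ℝ (fun p : ℝ × ℝ => γ p.1 p.2) (t, s) ((1:ℝ), (0:ℝ))) t := by
  have h := ((hγ.differentiable (by simp) (t, s)).hasFDerivAt).comp_hasDerivAt t
    ((hasDerivAt_id t).prodMk (hasDerivAt_const t s))
  simpa [Function.comp_def] using h

end KelvinAux

open KelvinAux

/-- Kelvin–Noether circulation law for a charged barotropic fluid:
along a loop advected by `U`, the circulation `∮ (U + aA)·dx` is conserved. -/
theorem charged_fluid_circulation_conserved
    (a : ℝ) (𝒰 : ℝ → ℝ) (h𝒰 : ContDiffOn ℝ (⊤ : ℕ∞) 𝒰 (Set.Ioi 0))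
    (ρ : V3 → ℝ → ℝ) (U A : V3 → ℝ → V3) (Φ : V3 → ℝ → ℝ)
    (hρ : ContDiff ℝ (⊤ : ℕ∞) (fun p : V3 × ℝ => ρ p.1 p.2))
    (hρpos : ∀ (x : V3) (t : ℝ), 0 < ρ x t)
    (hU : ContDiff ℝ (⊤ : ℕ∞) (fun p : V3 × ℝ => U p.1 p.2))
    (hA : ContDiff ℝ (⊤ : ℕ∞) (fun p : V3 × ℝ => A p.1 p.2))
    (hΦ : ContDiff ℝ (⊤ : ℕ∞) (fun p : V3 × ℝ => Φ p.1 p.2))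
    -- momentum equation, with E = −∇Φ − ∂_t A and B = ∇×A:
    (hmom : ∀ (x : V3) (t : ℝ) (i : Fin 3),
      deriv (fun τ => U x τ i) t
          + dot3 (U x t) (fun j => pd j (fun y => U y t i) x)
        = a * ((-pd i (fun y => Φ y t) x - deriv (fun τ => A x τ i) t)
              + cross3 (U x t) (vcurl (fun y => A y t) x) i)
          - (ρ x t)⁻¹ * pd i (fun y => (ρ y t) ^ 2 * deriv 𝒰 (ρ y t)) x)
    -- continuity equation:
    (hcont : ∀ (x : V3) (t : ℝ),
      deriv (fun τ => ρ x τ) t + ∑ j, pd j (fun y => ρ y t * U y t j) x = 0)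
    -- a smooth loop advected by U:
    (γ : ℝ → ℝ → V3)
    (hγ : ContDiff ℝ (⊤ : ℕ∞) (fun p : ℝ × ℝ => γ p.1 p.2))
    (hγper : ∀ t s : ℝ, γ t (s + 1) = γ t s)
    (hγadv : ∀ t s : ℝ, deriv (fun τ => γ τ s) t = U (γ t s) t) :
    ∀ t₁ t₂ : ℝ,
      (∫ s in (0:ℝ)..1,
          dot3 (fun i => U (γ t₁ s) t₁ i + a * A (γ t₁ s) t₁ i)
            (deriv (fun σ => γ t₁ σ) s))
        = ∫ s in (0:ℝ)..1,
            dot3 (fun i => U (γ t₂ s) t₂ i + a * A (γ t₂ s) t₂ i)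
              (deriv (fun σ => γ t₂ σ) s) := by
  intro t₁ t₂
  have hUi : ∀ i, ContDiff ℝ (⊤ : ℕ∞) (cf U i) := fun i =>
    (ContinuousLinearMap.proj (R := ℝ) (φ := fun _ : Fin 3 => ℝ) i).contDiff.comp hU
  have hAi : ∀ i, ContDiff ℝ (⊤ : ℕ∞) (cf A i) := fun i =>
    (ContinuousLinearMap.proj (R := ℝ) (φ := fun _ : Fin 3 => ℝ) i).contDiff.comp hA
  have hγc : ∀ t s, HasDerivAt (fun σ => γ t σ) (Gs γ t s) s := fun t s =>
    hasDerivAt_gamma_s hγ t s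
  have hfd10 : ∀ t s, fderiv ℝ (fun p : ℝ × ℝ => γ p.1 p.2) (t, s) ((1:ℝ), (0:ℝ))
      = U (γ t s) t := by
    intro t s
    rw [← (hasDerivAt_gamma_t hγ t s).deriv]
    exact hγadv t s
  have hγt : ∀ t s, HasDerivAt (fun τ => γ τ s) (U (γ t s) t) t := fun t s =>
    (hfd10 t s) ▸ hasDerivAt_gamma_t hγ t s
  -- mixed partial
  have hGst : ∀ t s i, HasDerivAt (fun τ => Gs γ τ s i)
      (∑ j, Gs γ t s j * pdP (cf U i) (γ t s) t j) t := by
    intro t s i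
    have hdiff : Differentiable ℝ (fderiv ℝ (fun p : ℝ × ℝ => γ p.1 p.2)) :=
      (hγ.fderiv_right (m := (⊤ : ℕ∞)) (by simp)).differentiable (by simp)
    have hB : HasFDerivAt (fderiv ℝ (fun p : ℝ × ℝ => γ p.1 p.2))
        (fderiv ℝ (fderiv ℝ (fun p : ℝ × ℝ => γ p.1 p.2)) (t, s)) (t, s) :=
      (hdiff (t, s)).hasFDerivAt
    set B2 := fderiv ℝ (fderiv ℝ (fun p : ℝ × ℝ => γ p.1 p.2)) (t, s) with hB2def
    have h1 : HasDerivAt (fun τ => fderiv ℝ (fun p : ℝ × ℝ => γ p.1 p.2) (τ, s))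
        (B2 ((1:ℝ), (0:ℝ))) t := by
      have := hB.comp_hasDerivAt t ((hasDerivAt_id t).prodMk (hasDerivAt_const t s))
      simpa [Function.comp_def] using this
    have h2 : HasDerivAt (fun τ => fderiv ℝ (fun p : ℝ × ℝ => γ p.1 p.2) (τ, s) ((0:ℝ), (1:ℝ)))
        (B2 ((1:ℝ), (0:ℝ)) ((0:ℝ), (1:ℝ))) t := by
      have := h1.clm_apply (hasDerivAt_const t (((0:ℝ), (1:ℝ)) : ℝ × ℝ))
      simpa using this
    have h3 : HasDerivAt (fun τ => Gs γ τ s i) (B2 ((1:ℝ), (0:ℝ)) ((0:ℝ), (1:ℝ)) i) t := by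
      have := (ContinuousLinearMap.proj (R := ℝ) (φ := fun _ : Fin 3 => ℝ) i).hasFDerivAt.comp_hasDerivAt t h2
      simpa [Function.comp_def, Gs] using this
    have hsym : B2 ((1:ℝ), (0:ℝ)) ((0:ℝ), (1:ℝ)) = B2 ((0:ℝ), (1:ℝ)) ((1:ℝ), (0:ℝ)) :=
      second_derivative_symmetric (fun p => (hγ.differentiable (by simp) p).hasFDerivAt) hB _ _
    have h4 : HasDerivAt (fun σ => fderiv ℝ (fun p : ℝ × ℝ => γ p.1 p.2) (t, σ))
        (B2 ((0:ℝ), (1:ℝ))) s := by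
      have := hB.comp_hasDerivAt s ((hasDerivAt_const s t).prodMk (hasDerivAt_id s))
      simpa [Function.comp_def] using this
    have h5 : HasDerivAt (fun σ => fderiv ℝ (fun p : ℝ × ℝ => γ p.1 p.2) (t, σ) ((1:ℝ), (0:ℝ)) i)
        (B2 ((0:ℝ), (1:ℝ)) ((1:ℝ), (0:ℝ)) i) s := by
      have h5' := h4.clm_apply (hasDerivAt_const s (((1:ℝ), (0:ℝ)) : ℝ × ℝ))
      have := (ContinuousLinearMap.proj (R := ℝ) (φ := fun _ : Fin 3 => ℝ) i).hasFDerivAt.comp_hasDerivAt s h5'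
      simpa [Function.comp_def] using this
    have heq : (fun σ => fderiv ℝ (fun p : ℝ × ℝ => γ p.1 p.2) (t, σ) ((1:ℝ), (0:ℝ)) i)
        = fun σ => U (γ t σ) t i := funext fun σ => by rw [hfd10 t σ]
    rw [heq] at h5
    have h7 : HasDerivAt (fun σ => U (γ t σ) t i)
        (∑ j, Gs γ t s j * pdP (cf U i) (γ t s) t j) s :=
      hasDerivAt_slice_s (hUi i) t (hγc t s)
    rw [hsym] at h3
    rwa [h5.unique h7] at h3
    -- facts about 𝒰
  have hUd1 : ∀ r : ℝ, 0 < r → HasDerivAt 𝒰 (deriv 𝒰 r) r := fun r hr =>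
    ((h𝒰.differentiableOn (by simp)).differentiableAt (isOpen_Ioi.mem_nhds hr)).hasDerivAt
  have hcd1 : ContDiffOn ℝ (⊤ : ℕ∞) (deriv 𝒰) (Set.Ioi 0) := h𝒰.deriv_of_isOpen isOpen_Ioi (by simp)
  have hUd2 : ∀ r : ℝ, 0 < r → HasDerivAt (deriv 𝒰) (deriv (deriv 𝒰) r) r := fun r hr =>
    ((hcd1.differentiableOn (by simp)).differentiableAt (isOpen_Ioi.mem_nhds hr)).hasDerivAt
  have hcd2 : ContDiffOn ℝ (⊤ : ℕ∞) (deriv (deriv 𝒰)) (Set.Ioi 0) :=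
    hcd1.deriv_of_isOpen isOpen_Ioi (by simp)
  -- cleaned momentum equation
  have hm : ∀ (x : V3) (t : ℝ) (i : Fin 3),
      tdP (cf U i) x t + (∑ j, U x t j * pdP (cf U i) x t j)
        = a * ((-pdP (sf Φ) x t i - tdP (cf A i) x t)
            + ((∑ j, U x t j * pdP (cf A j) x t i) - (∑ j, U x t j * pdP (cf A i) x t j)))
          - hde 𝒰 (ρ x t) * pdP (sf ρ) x t i := by
    intro x t i
    have h0 := hmom x t i
    have e1 : ∀ (i' j : Fin 3), pd j (fun y => U y t i') x = pdP (cf U i') x t j :=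
      fun i' j => pd_slice (hUi i') x t j
    have e1A : ∀ (i' j : Fin 3), pd j (fun y => A y t i') x = pdP (cf A i') x t j :=
      fun i' j => pd_slice (hAi i') x t j
    have e2 : deriv (fun τ => U x τ i) t = tdP (cf U i) x t := td_slice (hUi i) x t
    have e3 : deriv (fun τ => A x τ i) t = tdP (cf A i) x t := td_slice (hAi i) x t
    have e4 : pd i (fun y => Φ y t) x = pdP (sf Φ) x t i := pd_slice hΦ x t i
    have hx0 : 0 < ρ x t := hρpos x t
    have hρx : HasFDerivAt (fun y => ρ y t)
        ((fderiv ℝ (sf ρ) (x, t)).comp (ContinuousLinearMap.inl ℝ V3 ℝ)) x :=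
      by have h2 : HasFDerivAt (fun y : V3 => (y, t)) (ContinuousLinearMap.inl ℝ V3 ℝ) x := hasFDerivAt_prodMk_left x t; exact ((hρ.differentiable (by simp) (x, t)).hasFDerivAt).comp x h2
    have hq : HasDerivAt (fun r => r ^ 2 * deriv 𝒰 r)
        (2 * ρ x t * deriv 𝒰 (ρ x t) + (ρ x t) ^ 2 * deriv (deriv 𝒰) (ρ x t)) (ρ x t) := by
      have := (hasDerivAt_pow 2 (ρ x t)).fun_mul (hUd2 _ hx0)
      refine this.congr_deriv ?_
      symm
      ring
    have e5 : pd i (fun y => (ρ y t) ^ 2 * deriv 𝒰 (ρ y t)) x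
        = (2 * ρ x t * deriv 𝒰 (ρ x t) + (ρ x t) ^ 2 * deriv (deriv 𝒰) (ρ x t))
            * pdP (sf ρ) x t i := pd_comp hρx hq i
    have e6 : (ρ x t)⁻¹ * ((2 * ρ x t * deriv 𝒰 (ρ x t) + (ρ x t) ^ 2 * deriv (deriv 𝒰) (ρ x t))
          * pdP (sf ρ) x t i) = hde 𝒰 (ρ x t) * pdP (sf ρ) x t i := by
      rw [hde]
      field_simp
    have ecross : cross3 (U x t) (vcurl (fun y => A y t) x) i
        = (∑ j, U x t j * pdP (cf A j) x t i) - (∑ j, U x t j * pdP (cf A i) x t j) := by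
      fin_cases i <;> (simp [cross3, vcurl, Fin.sum_univ_three, e1A]; try ring)
    rw [e2, e3, e4, e5, ecross] at h0
    simp only [dot3, e1] at h0
    rw [h0, ← e6]
  -- time derivative of the integrand
  have hft : ∀ t s, HasDerivAt (fun τ => ffun a U A γ τ s) (Tint a 𝒰 ρ U A Φ γ t s) t := by
    intro t s
    have hU' : ∀ i, HasDerivAt (fun τ => U (γ τ s) τ i)
        ((∑ j, U (γ t s) t j * pdP (cf U i) (γ t s) t j) + tdP (cf U i) (γ t s) t) t := by
      intro i
      have := chainP (hUi i) (hγt t s) (hasDerivAt_id t)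
      simpa using this
    have hA' : ∀ i, HasDerivAt (fun τ => A (γ τ s) τ i)
        ((∑ j, U (γ t s) t j * pdP (cf A i) (γ t s) t j) + tdP (cf A i) (γ t s) t) t := by
      intro i
      have := chainP (hAi i) (hγt t s) (hasDerivAt_id t)
      simpa using this
    have hsum : HasDerivAt (fun τ => ∑ i, (U (γ τ s) τ i + a * A (γ τ s) τ i) * Gs γ τ s i)
        (∑ i, ((((∑ j, U (γ t s) t j * pdP (cf U i) (γ t s) t j) + tdP (cf U i) (γ t s) t)
              + a * ((∑ j, U (γ t s) t j * pdP (cf A i) (γ t s) t j) + tdP (cf A i) (γ t s) t))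
                * Gs γ t s i
            + (U (γ t s) t i + a * A (γ t s) t i)
                * (∑ j, Gs γ t s j * pdP (cf U i) (γ t s) t j))) t :=
      HasDerivAt.fun_sum fun i _ => ((hU' i).fun_add ((hA' i).const_mul a)).fun_mul (hGst t s i)
    have hval := hm (γ t s) t
    convert hsum using 1
    · rfl
    have hm0 := hval 0
    have hm1 := hval 1
    have hm2 := hval 2
    simp only [Fin.sum_univ_three] at hm0 hm1 hm2 ⊢
    simp only [Tint, Fin.sum_univ_three]
    linear_combination (-(Gs γ t s 0)) * hm0 - Gs γ t s 1 * hm1 - Gs γ t s 2 * hm2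
    -- s-derivative of the potential gfun
  have hgs : ∀ t s, HasDerivAt (fun σ => gfun a 𝒰 ρ U A Φ γ t σ) (Tint a 𝒰 ρ U A Φ γ t s) s := by
    intro t s
    have hUs : ∀ i, HasDerivAt (fun σ => U (γ t σ) t i)
        (∑ j, Gs γ t s j * pdP (cf U i) (γ t s) t j) s := fun i =>
      hasDerivAt_slice_s (hUi i) t (hγc t s)
    have hAs : ∀ i, HasDerivAt (fun σ => A (γ t σ) t i)
        (∑ j, Gs γ t s j * pdP (cf A i) (γ t s) t j) s := fun i =>
      hasDerivAt_slice_s (hAi i) t (hγc t s)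
    have hΦs : HasDerivAt (fun σ => Φ (γ t σ) t)
        (∑ j, Gs γ t s j * pdP (sf Φ) (γ t s) t j) s :=
      hasDerivAt_slice_s hΦ t (hγc t s)
    have hρs : HasDerivAt (fun σ => ρ (γ t σ) t)
        (∑ j, Gs γ t s j * pdP (sf ρ) (γ t s) t j) s :=
      hasDerivAt_slice_s hρ t (hγc t s)
    have hhs : HasDerivAt (fun σ => 𝒰 (ρ (γ t σ) t) + ρ (γ t σ) t * deriv 𝒰 (ρ (γ t σ) t))
        (hde 𝒰 (ρ (γ t s) t) * (∑ j, Gs γ t s j * pdP (sf ρ) (γ t s) t j)) s := by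
      have hh : HasDerivAt (fun r => 𝒰 r + r * deriv 𝒰 r) (hde 𝒰 (ρ (γ t s) t)) (ρ (γ t s) t) := by
        have := (hUd1 _ (hρpos (γ t s) t)).fun_add
          ((hasDerivAt_id (ρ (γ t s) t)).fun_mul (hUd2 _ (hρpos (γ t s) t)))
        refine this.congr_deriv ?_
        symm
        rw [hde]; simp only [id_eq]; ring
      have := hh.comp s hρs
      simpa [Function.comp_def] using this
    have h1 : HasDerivAt (fun σ => ∑ i, U (γ t σ) t i * A (γ t σ) t i)
        (∑ i, ((∑ j, Gs γ t s j * pdP (cf U i) (γ t s) t j) * A (γ t s) t i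
            + U (γ t s) t i * (∑ j, Gs γ t s j * pdP (cf A i) (γ t s) t j))) s :=
      HasDerivAt.fun_sum fun i _ => (hUs i).fun_mul (hAs i)
    have h2 : HasDerivAt (fun σ => ∑ i, U (γ t σ) t i ^ 2)
        (∑ i, ((2:ℕ) : ℝ) * U (γ t s) t i ^ (2 - 1) * (∑ j, Gs γ t s j * pdP (cf U i) (γ t s) t j)) s :=
      HasDerivAt.fun_sum fun i _ => (hUs i).fun_pow 2
    have htot := (((h1.const_mul a).fun_add (h2.div_const 2)).fun_sub (hΦs.const_mul a)).fun_sub hhs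
    refine htot.congr_deriv ?_
    symm
    simp only [Tint, Fin.sum_univ_three]
    push_cast
    ring
    -- continuity facts
  have hγp : Continuous (fun p : ℝ × ℝ => ((γ p.1 p.2 : V3), p.1)) :=
    hγ.continuous.prodMk continuous_fst
  have hGsc : Continuous (fun p : ℝ × ℝ => Gs γ p.1 p.2) :=
    (hγ.continuous_fderiv (by simp)).clm_apply continuous_const
  have hGsci : ∀ i, Continuous (fun p : ℝ × ℝ => Gs γ p.1 p.2 i) := fun i =>
    (continuous_apply i).comp hGsc
  have hUcc : ∀ i, Continuous (fun p : ℝ × ℝ => U (γ p.1 p.2) p.1 i) := fun i =>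
    ((hUi i).continuous).comp hγp
  have hAcc : ∀ i, Continuous (fun p : ℝ × ℝ => A (γ p.1 p.2) p.1 i) := fun i =>
    ((hAi i).continuous).comp hγp
  have hpU : ∀ i j, Continuous (fun p : ℝ × ℝ => pdP (cf U i) (γ p.1 p.2) p.1 j) := fun i j =>
    (continuous_pdP (hUi i) j).comp hγp
  have hpA : ∀ i j, Continuous (fun p : ℝ × ℝ => pdP (cf A i) (γ p.1 p.2) p.1 j) := fun i j =>
    (continuous_pdP (hAi i) j).comp hγp
  have hpΦ : ∀ j, Continuous (fun p : ℝ × ℝ => pdP (sf Φ) (γ p.1 p.2) p.1 j) := fun j =>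
    (continuous_pdP hΦ j).comp hγp
  have hpρ : ∀ j, Continuous (fun p : ℝ × ℝ => pdP (sf ρ) (γ p.1 p.2) p.1 j) := fun j =>
    (continuous_pdP hρ j).comp hγp
  have hρc : Continuous (fun p : ℝ × ℝ => ρ (γ p.1 p.2) p.1) := hρ.continuous.comp hγp
  have hhd : Continuous (fun p : ℝ × ℝ => hde 𝒰 (ρ (γ p.1 p.2) p.1)) := by
    have hcOn : ContinuousOn (hde 𝒰) (Set.Ioi 0) :=
      (continuousOn_const.mul hcd1.continuousOn).add (continuousOn_id.mul hcd2.continuousOn)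
    exact hcOn.comp_continuous hρc fun p => hρpos _ _
  have hTc : Continuous (fun p : ℝ × ℝ => Tint a 𝒰 ρ U A Φ γ p.1 p.2) := by
    unfold Tint
    refine continuous_finset_sum _ fun j _ => (hGsci j).mul ?_
    exact (((continuous_const.mul (continuous_finset_sum _ fun i _ =>
        ((hpU i j).mul (hAcc i)).add ((hUcc i).mul (hpA i j)))).add
      (continuous_finset_sum _ fun i _ => (hUcc i).mul (hpU i j))).sub
        (continuous_const.mul (hpΦ j))).sub (hhd.mul (hpρ j))
  have hFc : Continuous (fun p : ℝ × ℝ => ffun a U A γ p.1 p.2) := by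
    unfold ffun
    exact continuous_finset_sum _ fun i _ =>
      ((hUcc i).add (continuous_const.mul (hAcc i))).mul (hGsci i)
  -- conservation between ordered times
  have key : ∀ u v : ℝ, u ≤ v →
      (∫ s in (0:ℝ)..1, ffun a U A γ u s) = ∫ s in (0:ℝ)..1, ffun a U A γ v s := by
    intro u v huv
    have hTcont_t : ∀ s : ℝ, Continuous (fun t => Tint a 𝒰 ρ U A Φ γ t s) := fun s =>
      hTc.comp (continuous_id.prodMk continuous_const)
    have hTcont_s : ∀ t : ℝ, Continuous (fun s => Tint a 𝒰 ρ U A Φ γ t s) := fun t =>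
      hTc.comp (continuous_const.prodMk continuous_id)
    have hdiff_eq : ∀ s : ℝ, (∫ t in u..v, Tint a 𝒰 ρ U A Φ γ t s)
        = ffun a U A γ v s - ffun a U A γ u s := fun s =>
      intervalIntegral.integral_eq_sub_of_hasDerivAt (fun t _ => hft t s)
        ((hTcont_t s).intervalIntegrable u v)
    have hzero : ∀ t : ℝ, (∫ s in (0:ℝ)..1, Tint a 𝒰 ρ U A Φ γ t s) = 0 := by
      intro t
      rw [intervalIntegral.integral_eq_sub_of_hasDerivAt (fun σ _ => hgs t σ)
        ((hTcont_s t).intervalIntegrable 0 1)]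
      have hper : γ t 1 = γ t 0 := by simpa using hγper t 0
      simp [gfun, hper]
    have hswap : (∫ s in (0:ℝ)..1, ∫ t in u..v, Tint a 𝒰 ρ U A Φ γ t s)
        = ∫ t in u..v, ∫ s in (0:ℝ)..1, Tint a 𝒰 ρ U A Φ γ t s := by
      rw [intervalIntegral.integral_of_le huv, intervalIntegral.integral_of_le (zero_le_one' ℝ)]
      simp_rw [intervalIntegral.integral_of_le huv, intervalIntegral.integral_of_le (zero_le_one' ℝ)]
      have hint : Integrable (Function.uncurry fun s t => Tint a 𝒰 ρ U A Φ γ t s)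
          ((volume.restrict (Set.Ioc (0:ℝ) 1)).prod (volume.restrict (Set.Ioc u v))) := by
        rw [Measure.prod_restrict]
        have hc : Continuous (Function.uncurry fun s t => Tint a 𝒰 ρ U A Φ γ t s) :=
          hTc.comp continuous_swap
        have h1 : IntegrableOn (Function.uncurry fun s t => Tint a 𝒰 ρ U A Φ γ t s)
            (Set.Icc (0:ℝ) 1 ×ˢ Set.Icc u v) (volume.prod volume) :=
          hc.continuousOn.integrableOn_compact (isCompact_Icc.prod isCompact_Icc)
        exact h1.mono_set (Set.prod_mono Set.Ioc_subset_Icc_self Set.Ioc_subset_Icc_self)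
      exact MeasureTheory.integral_integral_swap hint
    have hIu : IntervalIntegrable (fun s => ffun a U A γ u s) volume 0 1 :=
      (hFc.comp (continuous_const.prodMk continuous_id)).intervalIntegrable 0 1
    have hIv : IntervalIntegrable (fun s => ffun a U A γ v s) volume 0 1 :=
      (hFc.comp (continuous_const.prodMk continuous_id)).intervalIntegrable 0 1
    have hfin : (∫ s in (0:ℝ)..1, ffun a U A γ v s) - (∫ s in (0:ℝ)..1, ffun a U A γ u s) = 0 := by
      rw [← intervalIntegral.integral_sub hIv hIu]
      rw [intervalIntegral.integral_congr (g := fun s => ∫ t in u..v, Tint a 𝒰 ρ U A Φ γ t s)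
        (fun s _ => (hdiff_eq s).symm)]
      rw [hswap]
      simp [hzero]
    linarith [hfin]
  have hrepr : ∀ t : ℝ, (∫ s in (0:ℝ)..1,
      dot3 (fun i => U (γ t s) t i + a * A (γ t s) t i) (deriv (fun σ => γ t σ) s))
      = ∫ s in (0:ℝ)..1, ffun a U A γ t s := by
    intro t
    refine intervalIntegral.integral_congr fun s _ => ?_
    rw [(hγc t s).deriv]
    simp [dot3, ffun]
  rcases le_total t₁ t₂ with h | h
  · rw [hrepr t₁, hrepr t₂]; exact key t₁ t₂ h
  · rw [hrepr t₁, hrepr t₂]; exact (key t₂ t₁ h).symm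
end
end

section
/- Let Φ : ℝ³ × ℝ → ℝ and A : ℝ³ × ℝ → ℝ³ be smooth, set E = −∇Φ − ∂_t A and B = ∇×A, and let q, m > 0. Let (x, v) : ℝ × ℝ → ℝ³ × ℝ³ be a smooth family of phase-space loops, 1-periodic in the second argument s, following the charged-particle characteristics: ∂_t x(t,s) = v(t,s) and m ∂_t v(t,s) = q( E(x(t,s),t) + v(t,s)×B(x(t,s),t) ). Then the Poincaré invariant I(t) = ∫₀¹ ( m v(t,s) + q A(x(t,s),t) )·∂_s x(t,s) ds is constant in time. -/
open MeasureTheory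

noncomputable section

/-- first partial of a function on ℝ². -/
def d1 (f : ℝ × ℝ → ℝ) (p : ℝ × ℝ) : ℝ := fderiv ℝ f p (1, 0)
def d2 (f : ℝ × ℝ → ℝ) (p : ℝ × ℝ) : ℝ := fderiv ℝ f p (0, 1)

lemma hasDerivAt_d1 {f : ℝ × ℝ → ℝ} (hf : ContDiff ℝ (⊤ : ℕ∞) f) (t s : ℝ) :
    HasDerivAt (fun τ => f (τ, s)) (d1 f (t, s)) t := by
  have h1 : HasDerivAt (fun τ : ℝ => (τ, s)) (((1:ℝ), (0:ℝ)) : ℝ × ℝ) t :=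
    (hasDerivAt_id t).prodMk (hasDerivAt_const t s)
  exact (hf.differentiable (by simp) (t, s)).hasFDerivAt.comp_hasDerivAt t h1

lemma hasDerivAt_d2 {f : ℝ × ℝ → ℝ} (hf : ContDiff ℝ (⊤ : ℕ∞) f) (t s : ℝ) :
    HasDerivAt (fun σ => f (t, σ)) (d2 f (t, s)) s := by
  have h1 : HasDerivAt (fun σ : ℝ => (t, σ)) (((0:ℝ), (1:ℝ)) : ℝ × ℝ) s :=
    (hasDerivAt_const s t).prodMk (hasDerivAt_id s)
  exact (hf.differentiable (by simp) (t, s)).hasFDerivAt.comp_hasDerivAt s h1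

lemma contDiff_d1 {f : ℝ × ℝ → ℝ} (hf : ContDiff ℝ (⊤ : ℕ∞) f) : ContDiff ℝ (⊤ : ℕ∞) (d1 f) := by
  have h := hf.fderiv_right (m := (⊤ : ℕ∞)) (by simp)
  exact (ContinuousLinearMap.apply ℝ ℝ (((1:ℝ), (0:ℝ)) : ℝ × ℝ)).contDiff.comp h

lemma contDiff_d2 {f : ℝ × ℝ → ℝ} (hf : ContDiff ℝ (⊤ : ℕ∞) f) : ContDiff ℝ (⊤ : ℕ∞) (d2 f) := by
  have h := hf.fderiv_right (m := (⊤ : ℕ∞)) (by simp)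
  exact (ContinuousLinearMap.apply ℝ ℝ (((0:ℝ), (1:ℝ)) : ℝ × ℝ)).contDiff.comp h

lemma d1_d2_comm {f : ℝ × ℝ → ℝ} (hf : ContDiff ℝ (⊤ : ℕ∞) f) (p : ℝ × ℝ) :
    d1 (d2 f) p = d2 (d1 f) p := by
  have hdf : DifferentiableAt ℝ (fderiv ℝ f) p :=
    ((hf.fderiv_right (m := (⊤ : ℕ∞)) (by simp)).differentiable (by simp)) p
  have key : ∀ v w : ℝ × ℝ,
      fderiv ℝ (fun q => fderiv ℝ f q v) p w = fderiv ℝ (fderiv ℝ f) p w v := by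
    intro v w
    have h2 : HasFDerivAt (fun q => fderiv ℝ f q v)
        (((ContinuousLinearMap.apply ℝ ℝ) v).comp (fderiv ℝ (fderiv ℝ f) p)) p :=
      ((ContinuousLinearMap.apply ℝ ℝ v).hasFDerivAt.comp p hdf.hasFDerivAt)
    rw [h2.fderiv]
    rfl
  have hsymm : IsSymmSndFDerivAt ℝ f p :=
    (hf.contDiffAt).isSymmSndFDerivAt (by rw [minSmoothness_of_isRCLikeNormedField]; exact WithTop.coe_le_coe.mpr le_top)
  show fderiv ℝ (fun q => fderiv ℝ f q (0,1)) p (1,0)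
      = fderiv ℝ (fun q => fderiv ℝ f q (1,0)) p (0,1)
  rw [key, key]
  exact hsymm _ _

lemma sum_single_smul (v : V3) : ∑ j, v j • (Pi.single j (1:ℝ) : V3) = v := by
  funext k
  simp [Finset.sum_apply, Pi.single_apply, mul_ite]

lemma clm_pair (L : V3 × ℝ →L[ℝ] ℝ) (v : V3) (c : ℝ) :
    L (v, c) = (∑ j, v j * L (Pi.single j 1, 0)) + c * L (0, 1) := by
  have h2 : ((v, c) : V3 × ℝ)
      = (∑ j, v j • (((Pi.single j 1 : V3), (0:ℝ)) : V3 × ℝ)) + c • (((0 : V3), (1:ℝ)) : V3 × ℝ) := by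
    have h3 : ∑ j, v j • (((Pi.single j 1 : V3), (0:ℝ)) : V3 × ℝ)
        = ((∑ j, v j • (Pi.single j 1 : V3) : V3), (0:ℝ)) := by
      rw [← prod_mk_sum]
      simp
    rw [h3, sum_single_smul, Prod.smul_mk]
    simp
  rw [h2, map_add, map_sum, _root_.map_smul, smul_eq_mul]
  congr 1
  refine Finset.sum_congr rfl fun j _ => ?_
  rw [_root_.map_smul, smul_eq_mul]

lemma hasDerivAt_comp_curve {g : V3 × ℝ → ℝ} (hg : ContDiff ℝ (⊤ : ℕ∞) g) {c : ℝ → V3} {c' : V3}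
    {e : ℝ → ℝ} {e' t : ℝ} (hc : HasDerivAt c c' t) (he : HasDerivAt e e' t) :
    HasDerivAt (fun τ => g (c τ, e τ)) (fderiv ℝ g (c t, e t) (c', e')) t :=
  (hg.differentiable (by simp) _).hasFDerivAt.comp_hasDerivAt t (hc.prodMk he)

lemma pd_eq {g : V3 × ℝ → ℝ} (hg : ContDiff ℝ (⊤ : ℕ∞) g) (x : V3) (t : ℝ) (i : Fin 3) :
    pd i (fun y => g (y, t)) x = fderiv ℝ g (x, t) (Pi.single i 1, 0) := by
  have h : HasFDerivAt (fun y => g (y, t))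
      ((fderiv ℝ g (x, t)).comp (ContinuousLinearMap.inl ℝ V3 ℝ)) x :=
    ((hg.differentiable (by simp) _).hasFDerivAt).comp x (hasFDerivAt_prodMk_left x t)
  unfold pd
  rw [h.fderiv]
  rfl

lemma derivT_eq {g : V3 × ℝ → ℝ} (hg : ContDiff ℝ (⊤ : ℕ∞) g) (x : V3) (t : ℝ) :
    deriv (fun τ => g (x, τ)) t = fderiv ℝ g (x, t) (0, 1) :=
  (hasDerivAt_comp_curve hg (hasDerivAt_const t x) (hasDerivAt_id t)).deriv

def Xc (X : ℝ → ℝ → V3) (i : Fin 3) : ℝ × ℝ → ℝ := fun p => X p.1 p.2 i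
def Ac (A : V3 → ℝ → V3) (X : ℝ → ℝ → V3) (i : Fin 3) : ℝ × ℝ → ℝ := fun p => A (X p.1 p.2) p.1 i
def Phc (Φ : V3 → ℝ → ℝ) (X : ℝ → ℝ → V3) : ℝ × ℝ → ℝ := fun p => Φ (X p.1 p.2) p.1
def FF (q m : ℝ) (A : V3 → ℝ → V3) (X Vl : ℝ → ℝ → V3) : ℝ × ℝ → ℝ :=
  fun p => ∑ i, (m * Xc Vl i p + q * Ac A X i p) * d2 (Xc X i) p
def GG (q m : ℝ) (Φ : V3 → ℝ → ℝ) (A : V3 → ℝ → V3) (X Vl : ℝ → ℝ → V3) : ℝ × ℝ → ℝ :=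
  fun p => (∑ i, (m/2 * Xc Vl i p * Xc Vl i p + q * Xc Vl i p * Ac A X i p)) - q * Phc Φ X p

section smoothness
variable {q m : ℝ} {Φ : V3 → ℝ → ℝ} {A : V3 → ℝ → V3} {X Vl : ℝ → ℝ → V3}

lemma smooth_Xc (hX : ContDiff ℝ (⊤ : ℕ∞) (fun p : ℝ × ℝ => X p.1 p.2)) (i : Fin 3) :
    ContDiff ℝ (⊤ : ℕ∞) (Xc X i) := contDiff_pi.mp hX i

lemma smooth_Ac (hA : ContDiff ℝ (⊤ : ℕ∞) (fun p : V3 × ℝ => A p.1 p.2))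
    (hX : ContDiff ℝ (⊤ : ℕ∞) (fun p : ℝ × ℝ => X p.1 p.2)) (i : Fin 3) :
    ContDiff ℝ (⊤ : ℕ∞) (Ac A X i) :=
  (contDiff_pi.mp hA i).comp (hX.prodMk contDiff_fst)

lemma smooth_Phc (hΦ : ContDiff ℝ (⊤ : ℕ∞) (fun p : V3 × ℝ => Φ p.1 p.2))
    (hX : ContDiff ℝ (⊤ : ℕ∞) (fun p : ℝ × ℝ => X p.1 p.2)) :
    ContDiff ℝ (⊤ : ℕ∞) (Phc Φ X) := hΦ.comp (hX.prodMk contDiff_fst)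

lemma smooth_FF (hA : ContDiff ℝ (⊤ : ℕ∞) (fun p : V3 × ℝ => A p.1 p.2))
    (hX : ContDiff ℝ (⊤ : ℕ∞) (fun p : ℝ × ℝ => X p.1 p.2))
    (hVl : ContDiff ℝ (⊤ : ℕ∞) (fun p : ℝ × ℝ => Vl p.1 p.2)) :
    ContDiff ℝ (⊤ : ℕ∞) (FF q m A X Vl) := by
  refine ContDiff.sum fun i _ => ?_
  exact ((contDiff_const.mul (smooth_Xc hVl i)).add
    (contDiff_const.mul (smooth_Ac hA hX i))).mul (contDiff_d2 (smooth_Xc hX i))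

lemma smooth_GG (hΦ : ContDiff ℝ (⊤ : ℕ∞) (fun p : V3 × ℝ => Φ p.1 p.2))
    (hA : ContDiff ℝ (⊤ : ℕ∞) (fun p : V3 × ℝ => A p.1 p.2))
    (hX : ContDiff ℝ (⊤ : ℕ∞) (fun p : ℝ × ℝ => X p.1 p.2))
    (hVl : ContDiff ℝ (⊤ : ℕ∞) (fun p : ℝ × ℝ => Vl p.1 p.2)) :
    ContDiff ℝ (⊤ : ℕ∞) (GG q m Φ A X Vl) := by
  refine ContDiff.sub (ContDiff.sum fun i _ => ?_) (contDiff_const.mul (smooth_Phc hΦ hX))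
  exact ((contDiff_const.mul (smooth_Xc hVl i)).mul (smooth_Xc hVl i)).add
    ((contDiff_const.mul (smooth_Xc hVl i)).mul (smooth_Ac hA hX i))

end smoothness


lemma key_deriv {q m : ℝ} {Φ : V3 → ℝ → ℝ} {A : V3 → ℝ → V3} {X Vl : ℝ → ℝ → V3}
    (hΦ : ContDiff ℝ (⊤ : ℕ∞) (fun p : V3 × ℝ => Φ p.1 p.2))
    (hA : ContDiff ℝ (⊤ : ℕ∞) (fun p : V3 × ℝ => A p.1 p.2))
    (hX : ContDiff ℝ (⊤ : ℕ∞) (fun p : ℝ × ℝ => X p.1 p.2))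
    (hVl : ContDiff ℝ (⊤ : ℕ∞) (fun p : ℝ × ℝ => Vl p.1 p.2))
    (hchar1 : ∀ t s : ℝ, deriv (fun τ => X τ s) t = Vl t s)
    (hchar2 : ∀ (t s : ℝ) (i : Fin 3),
      m * deriv (fun τ => Vl τ s i) t
        = q * ((-pd i (fun y => Φ y t) (X t s) - deriv (fun τ => A (X t s) τ i) t)
            + cross3 (Vl t s) (vcurl (fun y => A y t) (X t s)) i))
    (t s : ℝ) :
    HasDerivAt (fun τ => FF q m A X Vl (τ, s)) (d2 (GG q m Φ A X Vl) (t, s)) t := by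
  have hGA : ∀ i, ContDiff ℝ (⊤ : ℕ∞) (fun z : V3 × ℝ => A z.1 z.2 i) := fun i => contDiff_pi.mp hA i
  have hXd1 : ∀ t s : ℝ, HasDerivAt (fun τ => X τ s) (fun i => d1 (Xc X i) (t, s)) t :=
    fun t s => hasDerivAt_pi.mpr (fun i => hasDerivAt_d1 (smooth_Xc hX i) t s)
  have K1 : ∀ (t s : ℝ) (i : Fin 3), d1 (Xc X i) (t, s) = Vl t s i := by
    intro t s i
    have h := (hXd1 t s).deriv
    rw [hchar1 t s] at h
    exact (congrFun h.symm i)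
  have hXs : ∀ t s : ℝ, HasDerivAt (fun σ => X t σ) (fun i => d2 (Xc X i) (t, s)) s :=
    fun t s => hasDerivAt_pi.mpr (fun i => hasDerivAt_d2 (smooth_Xc hX i) t s)
  have K3 : ∀ (i : Fin 3) (p : ℝ × ℝ), d1 (d2 (Xc X i)) p = d2 (Xc Vl i) p := by
    intro i p
    rw [d1_d2_comm (smooth_Xc hX i) p]
    have hfun : d1 (Xc X i) = Xc Vl i := by
      funext p'
      have := K1 p'.1 p'.2 i
      simpa [Xc] using this
    rw [hfun]
  have hc : HasDerivAt (fun τ => X τ s) (Vl t s) t := by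
    have h := hXd1 t s
    rwa [show (fun i => d1 (Xc X i) (t, s)) = Vl t s from funext (K1 t s)] at h
  have hc2 : HasDerivAt (fun σ => X t σ) (fun i => d2 (Xc X i) (t, s)) s := hXs t s
  -- t-derivatives of potentials along the curve
  have hAt : ∀ i, HasDerivAt (fun τ => Ac A X i (τ, s))
      ((fderiv ℝ (fun z : V3 × ℝ => A z.1 z.2 i) (X t s, t)) (Vl t s, 1)) t := fun i =>
    hasDerivAt_comp_curve (hGA i) hc (hasDerivAt_id t)
  have hAs : ∀ i, HasDerivAt (fun σ => Ac A X i (t, σ))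
      ((fderiv ℝ (fun z : V3 × ℝ => A z.1 z.2 i) (X t s, t)) ((fun i => d2 (Xc X i) (t, s)), 0)) s :=
    fun i => hasDerivAt_comp_curve (hGA i) hc2 (hasDerivAt_const s t)
  have hPs : HasDerivAt (fun σ => Phc Φ X (t, σ))
      ((fderiv ℝ (fun z : V3 × ℝ => Φ z.1 z.2) (X t s, t)) ((fun i => d2 (Xc X i) (t, s)), 0)) s :=
    hasDerivAt_comp_curve hΦ hc2 (hasDerivAt_const s t)
  have hVt : ∀ i, HasDerivAt (fun τ => Xc Vl i (τ, s)) (d1 (Xc Vl i) (t, s)) t :=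
    fun i => hasDerivAt_d1 (smooth_Xc hVl i) t s
  have hVs : ∀ i, HasDerivAt (fun σ => Xc Vl i (t, σ)) (d2 (Xc Vl i) (t, s)) s :=
    fun i => hasDerivAt_d2 (smooth_Xc hVl i) t s
  have hF : HasDerivAt (fun τ => ∑ i, (m * Xc Vl i (τ, s) + q * Ac A X i (τ, s)) * d2 (Xc X i) (τ, s))
      (∑ i, ((m * d1 (Xc Vl i) (t, s)
          + q * (fderiv ℝ (fun z : V3 × ℝ => A z.1 z.2 i) (X t s, t)) (Vl t s, 1)) * d2 (Xc X i) (t, s)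
        + (m * Xc Vl i (t, s) + q * Ac A X i (t, s)) * d1 (d2 (Xc X i)) (t, s))) t := by
    refine HasDerivAt.fun_sum fun i _ => ?_
    exact (((hVt i).const_mul m).add ((hAt i).const_mul q)).mul
      (hasDerivAt_d1 (contDiff_d2 (smooth_Xc hX i)) t s)
  have hG : HasDerivAt (fun σ => (∑ i, (m / 2 * Xc Vl i (t, σ) * Xc Vl i (t, σ)
        + q * Xc Vl i (t, σ) * Ac A X i (t, σ))) - q * Phc Φ X (t, σ))
      ((∑ i, (((m / 2 * d2 (Xc Vl i) (t, s)) * Xc Vl i (t, s)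
            + (m / 2 * Xc Vl i (t, s)) * d2 (Xc Vl i) (t, s))
          + ((q * d2 (Xc Vl i) (t, s)) * Ac A X i (t, s)
            + (q * Xc Vl i (t, s))
              * ((fderiv ℝ (fun z : V3 × ℝ => A z.1 z.2 i) (X t s, t)) ((fun i => d2 (Xc X i) (t, s)), 0)))))
        - q * ((fderiv ℝ (fun z : V3 × ℝ => Φ z.1 z.2) (X t s, t)) ((fun i => d2 (Xc X i) (t, s)), 0))) s := by
    refine HasDerivAt.sub (HasDerivAt.fun_sum fun i _ => ?_) (hPs.const_mul q)
    exact (((hVs i).const_mul (m / 2)).mul (hVs i)).add (((hVs i).const_mul q).mul (hAs i))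
  have eqF := (hasDerivAt_d1 (smooth_FF hA hX hVl) t s).unique hF
  have eqG := (hasDerivAt_d2 (smooth_GG hΦ hA hX hVl) t s).unique hG
  -- physics input, with derivatives identified
  have hm2 : ∀ i : Fin 3, m * d1 (Xc Vl i) (t, s)
      = q * ((-(fderiv ℝ (fun z : V3 × ℝ => Φ z.1 z.2) (X t s, t)) (Pi.single i 1, 0)
          - (fderiv ℝ (fun z : V3 × ℝ => A z.1 z.2 i) (X t s, t)) ((0 : V3), 1))
        + cross3 (Vl t s) (vcurl (fun y => A y t) (X t s)) i) := by
    intro i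
    have h := hchar2 t s i
    have hd : deriv (fun τ => Vl τ s i) t = d1 (Xc Vl i) (t, s) :=
      (show HasDerivAt (fun τ => Vl τ s i) (d1 (Xc Vl i) (t, s)) t from hVt i).deriv
    rw [hd] at h
    rw [show pd i (fun y => Φ y t) (X t s)
        = (fderiv ℝ (fun z : V3 × ℝ => Φ z.1 z.2) (X t s, t)) (Pi.single i 1, 0) from
      pd_eq hΦ (X t s) t i] at h
    rw [show deriv (fun τ => A (X t s) τ i) t
        = (fderiv ℝ (fun z : V3 × ℝ => A z.1 z.2 i) (X t s, t)) ((0 : V3), 1) from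
      derivT_eq (hGA i) (X t s) t] at h
    exact h
  have pdA : ∀ i j : Fin 3, pd j (fun y => A y t i) (X t s)
      = (fderiv ℝ (fun z : V3 × ℝ => A z.1 z.2 i) (X t s, t)) (Pi.single j 1, 0) :=
    fun i j => pd_eq (hGA i) (X t s) t j
  have hLA1 := fun i : Fin 3 =>
    clm_pair (fderiv ℝ (fun z : V3 × ℝ => A z.1 z.2 i) (X t s, t)) (Vl t s) 1
  have hLAw := fun i : Fin 3 =>
    clm_pair (fderiv ℝ (fun z : V3 × ℝ => A z.1 z.2 i) (X t s, t)) (fun i => d2 (Xc X i) (t, s)) 0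
  have hLPw :=
    clm_pair (fderiv ℝ (fun z : V3 × ℝ => Φ z.1 z.2) (X t s, t)) (fun i => d2 (Xc X i) (t, s)) 0
  have main : d1 (FF q m A X Vl) (t, s) = d2 (GG q m Φ A X Vl) (t, s) := by
    rw [eqF, eqG]
    have h0 := hm2 0
    have h1 := hm2 1
    have h2 := hm2 2
    simp only [cross3, vcurl, Matrix.cons_val_zero, Matrix.cons_val_one, Matrix.head_cons,
      Matrix.cons_val_two, Matrix.tail_cons, pdA] at h0 h1 h2
    have hXcV : ∀ i : Fin 3, Xc Vl i (t, s) = Vl t s i := fun i => rfl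
    simp only [K3, hLA1, hLAw, hLPw, hXcV, Fin.sum_univ_three]
    linear_combination (d2 (Xc X 0) (t, s)) * h0 + (d2 (Xc X 1) (t, s)) * h1
      + (d2 (Xc X 2) (t, s)) * h2
  have hfin := hasDerivAt_d1 (smooth_FF (q := q) (m := m) hA hX hVl) t s
  rw [main] at hfin
  exact hfin

lemma FF_eq {q m : ℝ} {A : V3 → ℝ → V3} {X Vl : ℝ → ℝ → V3}
    (hX : ContDiff ℝ (⊤ : ℕ∞) (fun p : ℝ × ℝ => X p.1 p.2)) (t s : ℝ) :
    dot3 (fun i => m * Vl t s i + q * A (X t s) t i) (deriv (fun σ => X t σ) s)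
      = FF q m A X Vl (t, s) := by
  have hXs : HasDerivAt (fun σ => X t σ) (fun i => d2 (Xc X i) (t, s)) s :=
    hasDerivAt_pi.mpr (fun i => hasDerivAt_d2 (smooth_Xc hX i) t s)
  rw [show deriv (fun σ => X t σ) s = fun i => d2 (Xc X i) (t, s) from hXs.deriv]
  rfl

lemma loop_zero {q m : ℝ} {Φ : V3 → ℝ → ℝ} {A : V3 → ℝ → V3} {X Vl : ℝ → ℝ → V3}
    (hΦ : ContDiff ℝ (⊤ : ℕ∞) (fun p : V3 × ℝ => Φ p.1 p.2))
    (hA : ContDiff ℝ (⊤ : ℕ∞) (fun p : V3 × ℝ => A p.1 p.2))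
    (hX : ContDiff ℝ (⊤ : ℕ∞) (fun p : ℝ × ℝ => X p.1 p.2))
    (hVl : ContDiff ℝ (⊤ : ℕ∞) (fun p : ℝ × ℝ => Vl p.1 p.2))
    (hXper : ∀ t s : ℝ, X t (s + 1) = X t s)
    (hVlper : ∀ t s : ℝ, Vl t (s + 1) = Vl t s)
    (t : ℝ) :
    (∫ s in (0:ℝ)..1, d2 (GG q m Φ A X Vl) (t, s)) = 0 := by
  have hsm := smooth_GG (q := q) (m := m) hΦ hA hX hVl
  have hcont : Continuous fun σ : ℝ => d2 (GG q m Φ A X Vl) (t, σ) :=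
    ((contDiff_d2 hsm).continuous).comp (continuous_const.prodMk continuous_id)
  have hint : (∫ s in (0:ℝ)..1, d2 (GG q m Φ A X Vl) (t, s))
      = GG q m Φ A X Vl (t, 1) - GG q m Φ A X Vl (t, 0) := by
    refine intervalIntegral.integral_eq_sub_of_hasDerivAt
      (fun σ _ => hasDerivAt_d2 hsm t σ) ?_
    exact hcont.intervalIntegrable 0 1
  have e1 : X t 1 = X t 0 := by simpa using hXper t 0
  have e2 : Vl t 1 = Vl t 0 := by simpa using hVlper t 0
  rw [hint]
  simp [GG, Xc, Ac, Phc, e1, e2]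

/-- the Poincaré invariant
`I(t) = ∮ (m v + q A)·∂_s x ds` is conserved along a loop of charged-particle
characteristics in the electromagnetic field `E = −∇Φ − ∂_t A`, `B = ∇×A`. -/
theorem poincare_invariant_conserved
    (q m : ℝ) (hq : 0 < q) (hm : 0 < m)
    (Φ : V3 → ℝ → ℝ) (A : V3 → ℝ → V3)
    (hΦ : ContDiff ℝ (⊤ : ℕ∞) (fun p : V3 × ℝ => Φ p.1 p.2))
    (hA : ContDiff ℝ (⊤ : ℕ∞) (fun p : V3 × ℝ => A p.1 p.2))
    -- a smooth family of phase-space loops (X, Vl):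
    (X Vl : ℝ → ℝ → V3)
    (hX : ContDiff ℝ (⊤ : ℕ∞) (fun p : ℝ × ℝ => X p.1 p.2))
    (hVl : ContDiff ℝ (⊤ : ℕ∞) (fun p : ℝ × ℝ => Vl p.1 p.2))
    (hXper : ∀ t s : ℝ, X t (s + 1) = X t s)
    (hVlper : ∀ t s : ℝ, Vl t (s + 1) = Vl t s)
    -- characteristic equations: ẋ = v and m v̇ = q(E + v×B):
    (hchar1 : ∀ t s : ℝ, deriv (fun τ => X τ s) t = Vl t s)
    (hchar2 : ∀ (t s : ℝ) (i : Fin 3),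
      m * deriv (fun τ => Vl τ s i) t
        = q * ((-pd i (fun y => Φ y t) (X t s) - deriv (fun τ => A (X t s) τ i) t)
            + cross3 (Vl t s) (vcurl (fun y => A y t) (X t s)) i)) :
    ∀ t₁ t₂ : ℝ,
      (∫ s in (0:ℝ)..1,
          dot3 (fun i => m * Vl t₁ s i + q * A (X t₁ s) t₁ i)
            (deriv (fun σ => X t₁ σ) s))
        = ∫ s in (0:ℝ)..1,
            dot3 (fun i => m * Vl t₂ s i + q * A (X t₂ s) t₂ i)
              (deriv (fun σ => X t₂ σ) s) := by
  
  intro t₁ t₂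
  have hsmF := smooth_FF (q := q) (m := m) hA hX hVl
  have hcF : Continuous (FF q m A X Vl) := hsmF.continuous
  have hcF' : Continuous (d1 (FF q m A X Vl)) := (contDiff_d1 hsmF).continuous
  set I : ℝ → ℝ := fun t => ∫ s in (0:ℝ)..1, FF q m A X Vl (t, s) with hI
  have hIEq : ∀ t : ℝ,
      (∫ s in (0:ℝ)..1,
        dot3 (fun i => m * Vl t s i + q * A (X t s) t i) (deriv (fun σ => X t σ) s)) = I t :=
    fun t => intervalIntegral.integral_congr (fun s _ => FF_eq hX t s)
  have hDI : ∀ t₀ : ℝ, HasDerivAt I 0 t₀ := by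
    intro t₀
    -- bound on the compact set [t₀-1, t₀+1] × [0,1]
    obtain ⟨C, hC⟩ := (IsCompact.prod (isCompact_Icc (a := t₀ - 1) (b := t₀ + 1))
      (isCompact_Icc (a := (0:ℝ)) (b := 1))).exists_bound_of_continuousOn
      (hcF'.continuousOn)
    have key := intervalIntegral.hasDerivAt_integral_of_dominated_loc_of_deriv_le
      (F := fun t s => FF q m A X Vl (t, s)) (F' := fun t s => d1 (FF q m A X Vl) (t, s))
      (x₀ := t₀) (a := (0:ℝ)) (b := 1) (bound := fun _ => C) (μ := MeasureTheory.volume)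
      (s := Metric.ball t₀ 1) (Metric.ball_mem_nhds t₀ one_pos)
      (Filter.Eventually.of_forall (fun t =>
        ((hcF.comp (continuous_const.prodMk continuous_id)).aestronglyMeasurable)))
      ((hcF.comp (continuous_const.prodMk continuous_id)).intervalIntegrable 0 1)
      ((hcF'.comp (continuous_const.prodMk continuous_id)).aestronglyMeasurable)
      ?_ intervalIntegrable_const ?_
    · have hzero : (∫ s in (0:ℝ)..1, d1 (FF q m A X Vl) (t₀, s)) = 0 := by
        have heq : ∀ s : ℝ, d1 (FF q m A X Vl) (t₀, s) = d2 (GG q m Φ A X Vl) (t₀, s) :=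
          fun s => (hasDerivAt_d1 hsmF t₀ s).unique
            (key_deriv hΦ hA hX hVl hchar1 hchar2 t₀ s)
        rw [intervalIntegral.integral_congr (fun s _ => heq s)]
        exact loop_zero hΦ hA hX hVl hXper hVlper t₀
      rw [hzero] at key
      exact key.2
    · refine Filter.Eventually.of_forall (fun s hs t ht => ?_)
      have hs' : s ∈ Set.Icc (0:ℝ) 1 := by
        rcases hs with ⟨h1, h2⟩
        constructor
        · exact le_of_lt (by simpa using h1)
        · simpa using h2
      have ht' : t ∈ Set.Icc (t₀ - 1) (t₀ + 1) := by
        rw [Metric.mem_ball, Real.dist_eq, abs_sub_lt_iff] at ht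
        constructor <;> linarith [ht.1, ht.2]
      exact hC (t, s) ⟨ht', hs'⟩
    · exact Filter.Eventually.of_forall (fun s _ t _ => hasDerivAt_d1 hsmF t s)
  have hconst : I t₁ = I t₂ :=
    is_const_of_deriv_eq_zero (fun t => (hDI t).differentiableAt)
      (fun t => (hDI t).deriv) t₁ t₂
  rw [hIEq t₁, hIEq t₂, hconst]
end
end

section
/- Consider smooth fields on ℝ³ × ℝ: ρ > 0, U, B : ℝ³ × ℝ → ℝ³, and f : ℝ³ × ℝ³ × ℝ → ℝ compactly supported in v, satisfying the momentum equation of the first pressure-coupling hybrid MHD scheme: ρ(∂_t U + (U·∇)U) = −∇p − m Σ_j ∂_{x_j} ℙ_{j·} − μ₀⁻¹ B×(∇×B), with p = ρ² 𝒰'(ρ) and ℙ_{jk} = ∫ v_j v_k f dv, where m > 0 and μ₀ > 0 are constants. Let γ : ℝ × ℝ → ℝ³ be a smooth loop advected by U. Then d/dt ∫₀¹ U(γ(t,s),t)·∂_s γ(t,s) ds = −∫₀¹ ρ⁻¹ ( μ₀⁻¹ B×(∇×B) + m ∇·ℙ )(γ(t,s),t)·∂_s γ(t,s) ds, where (∇·ℙ)_i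 = Σ_j ∂_{x_j} ℙ_{ji}. -/
open MeasureTheory

noncomputable section

/-- Differentiation under the interval integral for a smooth integrand. -/
lemma hasDerivAt_param_integral (Φ : ℝ × ℝ → ℝ) (hΦ : ContDiff ℝ (⊤ : ℕ∞) Φ) (t : ℝ) :
    HasDerivAt (fun τ => ∫ s in (0:ℝ)..1, Φ (τ, s))
      (∫ s in (0:ℝ)..1, fderiv ℝ Φ (t, s) (1, 0)) t := by
  have hΦc : Continuous Φ := hΦ.continuous
  have hF'c : Continuous fun p : ℝ × ℝ => fderiv ℝ Φ p (1, 0) := by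
    have h1 : Continuous (fderiv ℝ Φ) := (hΦ.fderiv_right (m := (⊤ : ℕ∞)) (by simp)).continuous
    exact isBoundedBilinearMap_apply.continuous.comp (h1.prodMk continuous_const)
  obtain ⟨M, hM⟩ : ∃ M, ∀ p ∈ (Set.Icc (t-1) (t+1) ×ˢ Set.Icc (0:ℝ) 1),
      ‖fderiv ℝ Φ p (1, 0)‖ ≤ M :=
    (isCompact_Icc.prod isCompact_Icc).exists_bound_of_continuousOn hF'c.continuousOn
  have hdiff : ∀ (x : ℝ) (s : ℝ), HasDerivAt (fun x => Φ (x, s)) (fderiv ℝ Φ (x, s) (1, 0)) x := by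
    intro x s
    exact ((hΦ.differentiable (by simp) (x, s)).hasFDerivAt).comp_hasDerivAt x
      ((hasDerivAt_id x).prodMk (hasDerivAt_const x s))
  have := intervalIntegral.hasDerivAt_integral_of_dominated_loc_of_deriv_le (μ := volume)
    (a := 0) (b := 1) (x₀ := t) (s := Metric.ball t 1) (F := fun x s => Φ (x, s))
    (F' := fun x s => fderiv ℝ Φ (x, s) (1, 0)) (bound := fun _ => M)
    (Metric.ball_mem_nhds t one_pos)
    (Filter.Eventually.of_forall fun x =>
      (hΦc.comp (continuous_const.prodMk continuous_id)).aestronglyMeasurable)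
    ((hΦc.comp (continuous_const.prodMk continuous_id)).intervalIntegrable 0 1)
    ((hF'c.comp (continuous_const.prodMk continuous_id)).aestronglyMeasurable)
    (Filter.Eventually.of_forall fun s hs x hx => by
      refine hM (x, s) ⟨?_, ?_⟩
      · have := Metric.mem_ball.mp hx
        rw [Real.dist_eq] at this
        constructor <;> [linarith [abs_lt.mp this]; linarith [abs_lt.mp this]]
      · exact Set.mem_Icc.mpr ⟨le_of_lt (Set.mem_Ioc.mp (by simpa using hs)).1,
          (Set.mem_Ioc.mp (by simpa using hs)).2⟩)
    (intervalIntegrable_const)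
    (Filter.Eventually.of_forall fun s _ x _ => hdiff x s)
  exact this.2

/-- Abstract Kelvin step: if the τ-derivative of the integrand is `T` plus the
s-derivative of a 1-periodic function `g`, the circulation derivative is `-∫ T`. -/
lemma kelvin_abstract (Φ : ℝ × ℝ → ℝ) (g T : ℝ → ℝ) (t : ℝ)
    (hΦ : ContDiff ℝ (⊤ : ℕ∞) Φ) (hg : ContDiff ℝ (⊤ : ℕ∞) g) (hper : g 1 = g 0)
    (hkey : ∀ s, HasDerivAt g (fderiv ℝ Φ (t, s) (1, 0) + T s) s) :
    HasDerivAt (fun τ => ∫ s in (0:ℝ)..1, Φ (τ, s)) (-∫ s in (0:ℝ)..1, T s) t := by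
  have main := hasDerivAt_param_integral Φ hΦ t
  have hF'c : Continuous fun s : ℝ => fderiv ℝ Φ (t, s) (1, 0) := by
    have h1 : Continuous (fderiv ℝ Φ) := (hΦ.fderiv_right (m := (⊤ : ℕ∞)) (by simp)).continuous
    exact (isBoundedBilinearMap_apply.continuous.comp (h1.prodMk continuous_const)).comp
      (continuous_const.prodMk continuous_id)
  have hgd : Continuous (deriv g) := hg.continuous_deriv (by simp)
  have hTeq : T = fun s => deriv g s - fderiv ℝ Φ (t, s) (1, 0) := by
    funext s
    rw [(hkey s).deriv]; ring
  have hTc : Continuous T := by rw [hTeq]; exact hgd.sub hF'c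
  have h1 : ∫ s in (0:ℝ)..1, fderiv ℝ Φ (t, s) (1, 0)
      = (∫ s in (0:ℝ)..1, deriv g s) - ∫ s in (0:ℝ)..1, T s := by
    rw [← intervalIntegral.integral_sub (hgd.intervalIntegrable 0 1) (hTc.intervalIntegrable 0 1)]
    refine intervalIntegral.integral_congr fun s _ => ?_
    rw [hTeq]; ring
  have h2 : ∫ s in (0:ℝ)..1, deriv g s = g 1 - g 0 :=
    intervalIntegral.integral_deriv_eq_sub (fun s _ => hg.differentiable (by simp) s)
      (hgd.intervalIntegrable 0 1)
  rw [h1, h2, hper, sub_self, zero_sub] at main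
  exact main

/-- Evaluate a continuous linear map on `V3` through the coordinate basis. -/
lemma clm_apply_pi (L : (Fin 3 → ℝ) →L[ℝ] ℝ) (v : Fin 3 → ℝ) :
    L v = ∑ i, v i * L (Pi.single i 1) := by
  have hv : v = ∑ i, v i • (Pi.single i (1:ℝ) : Fin 3 → ℝ) := by
    have h := Finset.univ_sum_single v
    rw [← h]
    refine Finset.sum_congr rfl fun i _ => ?_
    ext j
    simp [Pi.single_apply]
  conv_lhs => rw [hv]
  rw [map_sum]
  refine Finset.sum_congr rfl fun i _ => ?_
  rw [L.map_smul, smul_eq_mul]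

/-- Evaluate a continuous linear map on `V3 × ℝ` through the coordinate basis. -/
lemma clm_apply_prod {F : Type*} [NormedAddCommGroup F] [NormedSpace ℝ F]
    (L : ((Fin 3 → ℝ) × ℝ) →L[ℝ] F) (v : Fin 3 → ℝ) (c : ℝ) :
    L (v, c) = (∑ j, v j • L ((Pi.single j 1 : Fin 3 → ℝ), (0:ℝ))) + c • L (0, 1) := by
  have hv : ((v, c) : (Fin 3 → ℝ) × ℝ)
      = (∑ j, v j • (((Pi.single j 1 : Fin 3 → ℝ), (0:ℝ)) : (Fin 3 → ℝ) × ℝ))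
        + c • (((0 : Fin 3 → ℝ), (1:ℝ)) : (Fin 3 → ℝ) × ℝ) := by
    apply Prod.ext
    · simp only [Prod.fst_add, Prod.fst_sum, Prod.smul_fst, Prod.smul_snd, smul_zero]
      have h := Finset.univ_sum_single v
      rw [show (∑ j, v j • (Pi.single j 1 : Fin 3 → ℝ)) = ∑ j, Pi.single j (v j) from
        Finset.sum_congr rfl fun i _ => by ext k; simp [Pi.single_apply], h]
      simp
    · simp [Prod.snd_sum]
  conv_lhs => rw [hv]
  rw [map_add, map_sum, L.map_smul]
  refine congrArg₂ (· + ·) (Finset.sum_congr rfl fun i _ => ?_) rfl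
  rw [L.map_smul]

/-- Kelvin circulation law for the momentum equation of the first
pressure-coupling hybrid MHD scheme:
`d/dt ∮ U·dx = −∮ ρ⁻¹ (μ₀⁻¹ B×(∇×B) + m ∇·ℙ)·dx` along a loop advected by `U`,
where `ℙ_{jk} = ∫ v_j v_k f dv`. -/
theorem pressure_coupling_kelvin_circulation_U
    (m μ₀ : ℝ) (hm : 0 < m) (hμ₀ : 0 < μ₀)
    (𝒰 : ℝ → ℝ) (h𝒰 : ContDiffOn ℝ (⊤ : ℕ∞) 𝒰 (Set.Ioi 0))
    (ρ : V3 → ℝ → ℝ) (U B : V3 → ℝ → V3) (f : V3 → V3 → ℝ → ℝ)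
    (hρ : ContDiff ℝ (⊤ : ℕ∞) (fun p : V3 × ℝ => ρ p.1 p.2))
    (hρpos : ∀ (x : V3) (t : ℝ), 0 < ρ x t)
    (hU : ContDiff ℝ (⊤ : ℕ∞) (fun p : V3 × ℝ => U p.1 p.2))
    (hB : ContDiff ℝ (⊤ : ℕ∞) (fun p : V3 × ℝ => B p.1 p.2))
    (hf : ContDiff ℝ (⊤ : ℕ∞) (fun p : V3 × V3 × ℝ => f p.1 p.2.1 p.2.2))
    (hfv : ∀ (x : V3) (t : ℝ), HasCompactSupport (fun v => f x v t))
    -- momentum equation with barotropic pressure p = ρ²𝒰'(ρ):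
    (hmom : ∀ (x : V3) (t : ℝ) (i : Fin 3),
      ρ x t * (deriv (fun τ => U x τ i) t
          + dot3 (U x t) (fun j => pd j (fun y => U y t i) x))
        = -pd i (fun y => (ρ y t) ^ 2 * deriv 𝒰 (ρ y t)) x
          - m * (∑ j, pd j (fun y => ∫ v : V3, v j * v i * f y v t) x)
          - μ₀⁻¹ * cross3 (B x t) (vcurl (fun y => B y t) x) i)
    -- a smooth loop advected by U:
    (γ : ℝ → ℝ → V3)
    (hγ : ContDiff ℝ (⊤ : ℕ∞) (fun p : ℝ × ℝ => γ p.1 p.2))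
    (hγper : ∀ t s : ℝ, γ t (s + 1) = γ t s)
    (hγadv : ∀ t s : ℝ, deriv (fun τ => γ τ s) t = U (γ t s) t) :
    ∀ t : ℝ,
      HasDerivAt (fun τ => ∫ s in (0:ℝ)..1,
          dot3 (U (γ τ s) τ) (deriv (fun σ => γ τ σ) s))
        (-∫ s in (0:ℝ)..1,
          (ρ (γ t s) t)⁻¹ *
            dot3 (fun i =>
                μ₀⁻¹ * cross3 (B (γ t s) t) (vcurl (fun y => B y t) (γ t s)) i
                  + m * ∑ j, pd j (fun y => ∫ v : V3, v j * v i * f y v t) (γ t s))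
              (deriv (fun σ => γ t σ) s))
        t := by
  intro t
  -- derivatives of the loop map
  have hD : ∀ τ σ : ℝ, HasDerivAt (fun σ' => γ τ σ')
      (fderiv ℝ (fun p : ℝ × ℝ => γ p.1 p.2) (τ, σ) (0, 1)) σ := by
    intro τ σ
    have h1 : HasDerivAt (fun σ' : ℝ => ((τ, σ') : ℝ × ℝ)) ((0:ℝ), (1:ℝ)) σ :=
      (hasDerivAt_const σ τ).prodMk (hasDerivAt_id σ)
    exact ((hγ.differentiable (by simp) (τ, σ)).hasFDerivAt).comp_hasDerivAt σ h1
  have hDt : ∀ τ σ : ℝ, HasDerivAt (fun τ' => γ τ' σ)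
      (fderiv ℝ (fun p : ℝ × ℝ => γ p.1 p.2) (τ, σ) (1, 0)) τ := by
    intro τ σ
    have h1 : HasDerivAt (fun τ' : ℝ => ((τ', σ) : ℝ × ℝ)) ((1:ℝ), (0:ℝ)) τ :=
      (hasDerivAt_id τ).prodMk (hasDerivAt_const τ σ)
    exact ((hγ.differentiable (by simp) (τ, σ)).hasFDerivAt).comp_hasDerivAt τ h1
  have hWeq : ∀ τ σ : ℝ,
      fderiv ℝ (fun p : ℝ × ℝ => γ p.1 p.2) (τ, σ) (1, 0) = U (γ τ σ) τ := by
    intro τ σ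
    rw [← (hDt τ σ).deriv, hγadv τ σ]
  -- smoothness of Φ
  have hWsm : ContDiff ℝ (⊤ : ℕ∞) (fun p : ℝ × ℝ => U (γ p.1 p.2) p.1) :=
    hU.comp (hγ.prodMk contDiff_fst)
  have hHD : ContDiff ℝ (⊤ : ℕ∞) (fun p : ℝ × ℝ =>
      fderiv ℝ (fun p' : ℝ × ℝ => γ p'.1 p'.2) p ((0:ℝ), (1:ℝ))) :=
    (hγ.fderiv_right (m := (⊤ : ℕ∞)) (by simp)).clm_apply contDiff_const
  have hΦsm : ContDiff ℝ (⊤ : ℕ∞) (fun p : ℝ × ℝ => ∑ i, U (γ p.1 p.2) p.1 i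
      * fderiv ℝ (fun p' : ℝ × ℝ => γ p'.1 p'.2) p ((0:ℝ), (1:ℝ)) i) :=
    ContDiff.sum fun i _ => (contDiff_pi.mp hWsm i).mul (contDiff_pi.mp hHD i)
  -- smoothness of g
  have hγt : ContDiff ℝ (⊤ : ℕ∞) (fun σ : ℝ => γ t σ) := hγ.comp (contDiff_const.prodMk contDiff_id)
  have hψ : ContDiff ℝ (⊤ : ℕ∞) (fun σ : ℝ => ρ (γ t σ) t) := hρ.comp (hγt.prodMk contDiff_const)
  have hUc : ContDiff ℝ (⊤ : ℕ∞) (fun σ : ℝ => U (γ t σ) t) := hU.comp (hγt.prodMk contDiff_const)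
  have h𝒰' : ContDiffOn ℝ (⊤ : ℕ∞) (deriv 𝒰) (Set.Ioi 0) := h𝒰.deriv_of_isOpen isOpen_Ioi (by simp)
  have h𝒰ψ : ContDiff ℝ (⊤ : ℕ∞) (fun σ : ℝ => 𝒰 (ρ (γ t σ) t)) := by
    have h := h𝒰.comp_contDiff hψ (fun σ => Set.mem_Ioi.mpr (hρpos _ t))
    exact h
  have h𝒰'ψ : ContDiff ℝ (⊤ : ℕ∞) (fun σ : ℝ => deriv 𝒰 (ρ (γ t σ) t)) := by
    have h := h𝒰'.comp_contDiff hψ (fun σ => Set.mem_Ioi.mpr (hρpos _ t))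
    exact h
  have hgsm : ContDiff ℝ (⊤ : ℕ∞) (fun σ : ℝ => (1/2 : ℝ) * ∑ i, (U (γ t σ) t i) ^ 2
      - (𝒰 (ρ (γ t σ) t) + ρ (γ t σ) t * deriv 𝒰 (ρ (γ t σ) t))) :=
    (contDiff_const.mul (ContDiff.sum fun i _ => (contDiff_pi.mp hUc i).pow 2)).sub
      (h𝒰ψ.add (hψ.mul h𝒰'ψ))
  -- periodicity of g
  have hper : ((1/2 : ℝ) * ∑ i, (U (γ t 1) t i) ^ 2
      - (𝒰 (ρ (γ t 1) t) + ρ (γ t 1) t * deriv 𝒰 (ρ (γ t 1) t)))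
      = ((1/2 : ℝ) * ∑ i, (U (γ t 0) t i) ^ 2
      - (𝒰 (ρ (γ t 0) t) + ρ (γ t 0) t * deriv 𝒰 (ρ (γ t 0) t))) := by
    have hp : γ t 1 = γ t 0 := by simpa using hγper t 0
    rw [hp]
  -- the key pointwise identity
  have hkey : ∀ s : ℝ, HasDerivAt (fun σ : ℝ => (1/2 : ℝ) * ∑ i, (U (γ t σ) t i) ^ 2
      - (𝒰 (ρ (γ t σ) t) + ρ (γ t σ) t * deriv 𝒰 (ρ (γ t σ) t)))
      (fderiv ℝ (fun p : ℝ × ℝ => ∑ i, U (γ p.1 p.2) p.1 i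
          * fderiv ℝ (fun p' : ℝ × ℝ => γ p'.1 p'.2) p ((0:ℝ), (1:ℝ)) i) (t, s) (1, 0)
        + (ρ (γ t s) t)⁻¹ *
            dot3 (fun i =>
                μ₀⁻¹ * cross3 (B (γ t s) t) (vcurl (fun y => B y t) (γ t s)) i
                  + m * ∑ j, pd j (fun y => ∫ v : V3, v j * v i * f y v t) (γ t s))
              (deriv (fun σ => γ t σ) s)) s := by
    intro s
    set x := γ t s with hxdef
    set r := ρ x t with hrdef
    have hr : (0:ℝ) < r := hρpos x t
    have hρt : ContDiff ℝ (⊤ : ℕ∞) (fun y : V3 => ρ y t) := hρ.comp (contDiff_id.prodMk contDiff_const)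
    have hLρ : HasFDerivAt (fun y : V3 => ρ y t) (fderiv ℝ (fun y : V3 => ρ y t) x) x :=
      (hρt.differentiable (by simp) x).hasFDerivAt
    set Lρ := fderiv ℝ (fun y : V3 => ρ y t) x with hLρdef
    have hmem : Set.Ioi (0:ℝ) ∈ nhds r := isOpen_Ioi.mem_nhds hr
    have hc1 : HasDerivAt 𝒰 (deriv 𝒰 r) r :=
      ((h𝒰.contDiffAt hmem).differentiableAt (by simp)).hasDerivAt
    have hc2 : HasDerivAt (deriv 𝒰) (deriv (deriv 𝒰) r) r :=
      ((h𝒰'.contDiffAt hmem).differentiableAt (by simp)).hasDerivAt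
    set c1 := deriv 𝒰 r with hc1def
    set c2 := deriv (deriv 𝒰) r with hc2def
    have hq : HasDerivAt (fun z : ℝ => z ^ 2 * deriv 𝒰 z) (2*r*c1 + r^2*c2) r := by
      have h := (hasDerivAt_pow 2 r).mul hc2
      refine h.congr_deriv (Eq.symm ?_)
      push_cast
      ring
    have hPf : HasFDerivAt (fun y : V3 => (ρ y t) ^ 2 * deriv 𝒰 (ρ y t))
        ((2*r*c1 + r^2*c2) • Lρ) x := by have h := hq.comp_hasFDerivAt x hLρ; exact h
    have hPd : ∀ i, pd i (fun y => (ρ y t) ^ 2 * deriv 𝒰 (ρ y t)) x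
        = (2*r*c1 + r^2*c2) * Lρ (Pi.single i 1) := by
      intro i
      simp only [pd]
      rw [hPf.fderiv]
      simp
    set Dv := fderiv ℝ (fun p : ℝ × ℝ => γ p.1 p.2) (t, s) ((0:ℝ), (1:ℝ)) with hDvdef
    have hγts : HasDerivAt (fun σ => γ t σ) Dv s := hD t s
    have hRs : HasDerivAt (fun σ => ρ (γ t σ) t) (Lρ Dv) s := hLρ.comp_hasDerivAt s hγts
    have henth : HasDerivAt
        (fun σ => 𝒰 (ρ (γ t σ) t) + ρ (γ t σ) t * deriv 𝒰 (ρ (γ t σ) t))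
        ((2*c1 + r*c2) * Lρ Dv) s := by
      have h1 : HasDerivAt (fun σ => 𝒰 (ρ (γ t σ) t)) (c1 * Lρ Dv) s := hc1.comp s hRs
      have h2 : HasDerivAt (fun z : ℝ => z * deriv 𝒰 z) (1 * deriv 𝒰 r + r * c2) r :=
        (hasDerivAt_id r).mul hc2
      have h3 := h2.comp s hRs
      have h4 := h1.add h3
      refine h4.congr_deriv (Eq.symm ?_)
      ring
    -- Clairaut / symmetry of second derivatives
    have hHsm : ContDiff ℝ (⊤ : ℕ∞) (fderiv ℝ (fun p : ℝ × ℝ => γ p.1 p.2)) :=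
      hγ.fderiv_right (m := (⊤ : ℕ∞)) (by simp)
    have hHτ : HasDerivAt (fun τ => fderiv ℝ (fun p : ℝ × ℝ => γ p.1 p.2) (τ, s))
        (fderiv ℝ (fderiv ℝ (fun p : ℝ × ℝ => γ p.1 p.2)) (t, s) (1, 0)) t :=
      ((hHsm.differentiable (by simp) (t, s)).hasFDerivAt).comp_hasDerivAt t
        ((hasDerivAt_id t).prodMk (hasDerivAt_const t s))
    have hHσ : HasDerivAt (fun σ => fderiv ℝ (fun p : ℝ × ℝ => γ p.1 p.2) (t, σ))
        (fderiv ℝ (fderiv ℝ (fun p : ℝ × ℝ => γ p.1 p.2)) (t, s) (0, 1)) s :=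
      ((hHsm.differentiable (by simp) (t, s)).hasFDerivAt).comp_hasDerivAt s
        ((hasDerivAt_const s t).prodMk (hasDerivAt_id s))
    set Ev := fderiv ℝ (fderiv ℝ (fun p : ℝ × ℝ => γ p.1 p.2)) (t, s) ((0:ℝ), (1:ℝ))
        ((1:ℝ), (0:ℝ)) with hEvdef
    have hsymm : fderiv ℝ (fderiv ℝ (fun p : ℝ × ℝ => γ p.1 p.2)) (t, s)
        ((1:ℝ), (0:ℝ)) ((0:ℝ), (1:ℝ)) = Ev :=
      second_derivative_symmetric (fun y => (hγ.differentiable (by simp) y).hasFDerivAt)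
        ((hHsm.differentiable (by simp) (t, s)).hasFDerivAt) (1, 0) (0, 1)
    have hWσ : HasDerivAt (fun σ => U (γ t σ) t) Ev s := by
      have h1 : HasDerivAt
          (fun σ => fderiv ℝ (fun p : ℝ × ℝ => γ p.1 p.2) (t, σ) ((1:ℝ), (0:ℝ))) Ev s := by
        have h := hHσ.clm_apply (hasDerivAt_const s ((1:ℝ), (0:ℝ)))
        simpa using h
      have h2 : (fun σ => fderiv ℝ (fun p : ℝ × ℝ => γ p.1 p.2) (t, σ) ((1:ℝ), (0:ℝ)))
          = fun σ => U (γ t σ) t := funext fun σ => hWeq t σ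
      rwa [h2] at h1
    have hEτ : HasDerivAt
        (fun τ => fderiv ℝ (fun p : ℝ × ℝ => γ p.1 p.2) (τ, s) ((0:ℝ), (1:ℝ))) Ev t := by
      have h := hHτ.clm_apply (hasDerivAt_const t ((0:ℝ), (1:ℝ)))
      simpa [hsymm] using h
    -- advective derivative of U
    have hγτs : HasDerivAt (fun τ => γ τ s) (U x t) t := by
      have h := hDt t s
      rwa [hWeq t s] at h
    have hcurve : HasDerivAt (fun τ => ((γ τ s, τ) : V3 × ℝ)) ((U x t, 1)) t :=
      hγτs.prodMk (hasDerivAt_id t)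
    have hLu : HasFDerivAt (fun q : V3 × ℝ => U q.1 q.2)
        (fderiv ℝ (fun q : V3 × ℝ => U q.1 q.2) (x, t)) (x, t) :=
      (hU.differentiable (by simp) (x, t)).hasFDerivAt
    set Lu := fderiv ℝ (fun q : V3 × ℝ => U q.1 q.2) (x, t) with hLudef
    have hA : HasDerivAt (fun τ => U (γ τ s) τ) (Lu (U x t, 1)) t := by
      have h := HasFDerivAt.comp_hasDerivAt (l := fun q : V3 × ℝ => U q.1 q.2)
        (f := fun τ => ((γ τ s, τ) : V3 × ℝ)) t hLu hcurve
      exact h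
    have hLu01 : ∀ i, Lu ((0 : V3), (1:ℝ)) i = deriv (fun τ => U x τ i) t := by
      intro i
      have h1 : HasDerivAt (fun τ => U x τ) (Lu (0, 1)) t :=
        hLu.comp_hasDerivAt t ((hasDerivAt_const t x).prodMk (hasDerivAt_id t))
      exact ((hasDerivAt_pi.mp h1 i).deriv).symm
    have hLuj : ∀ (i j : Fin 3), Lu ((Pi.single j 1 : V3), (0:ℝ)) i
        = pd j (fun y => U y t i) x := by
      intro i j
      have h1 : HasFDerivAt (fun y : V3 => U y t)
          (Lu.comp ((ContinuousLinearMap.id ℝ V3).prod 0)) x :=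
        HasFDerivAt.comp (g := fun q : V3 × ℝ => U q.1 q.2) (f := fun y : V3 => (y, t)) x hLu ((hasFDerivAt_id x).prodMk (hasFDerivAt_const t x))
      have h2 : HasFDerivAt (fun y : V3 => U y t i)
          ((ContinuousLinearMap.proj i).comp
            (Lu.comp ((ContinuousLinearMap.id ℝ V3).prod 0))) x :=
        (ContinuousLinearMap.proj (R := ℝ) (φ := fun _ : Fin 3 => ℝ) i).hasFDerivAt.comp x h1
      simp only [pd]
      rw [h2.fderiv]
      simp
    have hAv : ∀ i, Lu (U x t, 1) i = deriv (fun τ => U x τ i) t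
        + dot3 (U x t) (fun j => pd j (fun y => U y t i) x) := by
      intro i
      rw [clm_apply_prod Lu (U x t) 1]
      simp only [dot3, Pi.add_apply, Finset.sum_apply, Pi.smul_apply, smul_eq_mul, one_smul]
      rw [add_comm]
      congr 1
      · exact hLu01 i
      · exact Finset.sum_congr rfl fun j _ => by rw [hLuj i j]
    have hmom' : ∀ i, r * Lu (U x t, 1) i
        = -((2*r*c1 + r^2*c2) * Lρ (Pi.single i 1))
          - m * (∑ j, pd j (fun y => ∫ v : V3, v j * v i * f y v t) x)
          - μ₀⁻¹ * cross3 (B x t) (vcurl (fun y => B y t) x) i := by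
      intro i
      rw [hAv i, ← hPd i]
      exact hmom x t i
    -- kinetic-energy derivative
    have hWi : ∀ i, HasDerivAt (fun σ => U (γ t σ) t i) (Ev i) s :=
      fun i => hasDerivAt_pi.mp hWσ i
    have hkin : HasDerivAt (fun σ => (1/2 : ℝ) * ∑ i, (U (γ t σ) t i) ^ 2)
        (∑ i, U x t i * Ev i) s := by
      have h1 : HasDerivAt (fun σ => ∑ i, (U (γ t σ) t i) ^ 2)
          (∑ i, 2 * U x t i * Ev i) s := by
        refine HasDerivAt.fun_sum fun i _ => ?_
        have h := (hWi i).pow 2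
        refine h.congr_deriv (Eq.symm ?_)
        push_cast
        ring
      have h2 := h1.const_mul (1/2 : ℝ)
      refine h2.congr_deriv (Eq.symm ?_)
      rw [Finset.mul_sum]
      exact Finset.sum_congr rfl fun i _ => by ring
    have hgd : HasDerivAt (fun σ => (1/2 : ℝ) * ∑ i, (U (γ t σ) t i) ^ 2
        - (𝒰 (ρ (γ t σ) t) + ρ (γ t σ) t * deriv 𝒰 (ρ (γ t σ) t)))
        ((∑ i, U x t i * Ev i) - (2*c1 + r*c2) * Lρ Dv) s := hkin.sub henth
    -- τ-derivative of Φ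
    have hAi : ∀ i, HasDerivAt (fun τ => U (γ τ s) τ i) (Lu (U x t, 1) i) t :=
      fun i => hasDerivAt_pi.mp hA i
    have hEi : ∀ i, HasDerivAt
        (fun τ => fderiv ℝ (fun p : ℝ × ℝ => γ p.1 p.2) (τ, s) ((0:ℝ), (1:ℝ)) i) (Ev i) t :=
      fun i => hasDerivAt_pi.mp hEτ i
    have hΦτ' : HasDerivAt (fun τ => ∑ i, U (γ τ s) τ i
        * fderiv ℝ (fun p : ℝ × ℝ => γ p.1 p.2) (τ, s) ((0:ℝ), (1:ℝ)) i)
        (∑ i, (Lu (U x t, 1) i * Dv i + U x t i * Ev i)) t :=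
      HasDerivAt.fun_sum fun i _ => (hAi i).mul (hEi i)
    have hΦτ : HasDerivAt (fun τ => ∑ i, U (γ τ s) τ i
        * fderiv ℝ (fun p : ℝ × ℝ => γ p.1 p.2) (τ, s) ((0:ℝ), (1:ℝ)) i)
        (fderiv ℝ (fun p : ℝ × ℝ => ∑ i, U (γ p.1 p.2) p.1 i
          * fderiv ℝ (fun p' : ℝ × ℝ => γ p'.1 p'.2) p ((0:ℝ), (1:ℝ)) i) (t, s) (1, 0)) t := by
      have h := ((hΦsm.differentiable (by simp) (t, s)).hasFDerivAt).comp_hasDerivAt t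
        ((hasDerivAt_id t).prodMk (hasDerivAt_const t s))
      exact h
    have hval : fderiv ℝ (fun p : ℝ × ℝ => ∑ i, U (γ p.1 p.2) p.1 i
          * fderiv ℝ (fun p' : ℝ × ℝ => γ p'.1 p'.2) p ((0:ℝ), (1:ℝ)) i) (t, s) (1, 0)
        = ∑ i, (Lu (U x t, 1) i * Dv i + U x t i * Ev i) := hΦτ.unique hΦτ'
    have hLuexp : ∀ i, Lu (U x t, 1) i
        = r⁻¹ * (-((2*r*c1 + r^2*c2) * Lρ (Pi.single i 1))
          - m * (∑ j, pd j (fun y => ∫ v : V3, v j * v i * f y v t) x)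
          - μ₀⁻¹ * cross3 (B x t) (vcurl (fun y => B y t) x) i) := by
      intro i
      have h := hmom' i
      field_simp at h ⊢
      linarith [h]
    have hS : Lρ Dv = ∑ i, Dv i * Lρ (Pi.single i 1) := clm_apply_pi Lρ Dv
    -- conclude
    refine hgd.congr_deriv (Eq.symm ?_)
    rw [hval, hγts.deriv, hS]
    simp only [dot3]
    have h1 : ∑ i, (Lu (U x t, 1) i * Dv i + U x t i * Ev i)
        = r⁻¹ * (∑ i, (-((2*r*c1 + r^2*c2) * Lρ (Pi.single i 1))
            - m * (∑ j, pd j (fun y => ∫ v : V3, v j * v i * f y v t) x)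
            - μ₀⁻¹ * cross3 (B x t) (vcurl (fun y => B y t) x) i) * Dv i)
          + ∑ i, U x t i * Ev i := by
      rw [Finset.sum_add_distrib, Finset.mul_sum]
      congr 1
      exact Finset.sum_congr rfl fun i _ => by rw [hLuexp i]; ring
    rw [h1]
    have h3 : (∑ i, (-((2*r*c1 + r^2*c2) * Lρ (Pi.single i 1))
            - m * (∑ j, pd j (fun y => ∫ v : V3, v j * v i * f y v t) x)
            - μ₀⁻¹ * cross3 (B x t) (vcurl (fun y => B y t) x) i) * Dv i)
        + (∑ i, (μ₀⁻¹ * cross3 (B x t) (vcurl (fun y => B y t) x) i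
            + m * ∑ j, pd j (fun y => ∫ v : V3, v j * v i * f y v t) x) * Dv i)
        = -(2*r*c1 + r^2*c2) * ∑ i, Dv i * Lρ (Pi.single i 1) := by
      rw [← Finset.sum_add_distrib, Finset.mul_sum]
      exact Finset.sum_congr rfl fun i _ => by ring
    have hrne : r ≠ 0 := ne_of_gt hr
    have h4 : r⁻¹ * ((∑ i, (-((2*r*c1 + r^2*c2) * Lρ (Pi.single i 1))
            - m * (∑ j, pd j (fun y => ∫ v : V3, v j * v i * f y v t) x)
            - μ₀⁻¹ * cross3 (B x t) (vcurl (fun y => B y t) x) i) * Dv i)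
          + (∑ i, (μ₀⁻¹ * cross3 (B x t) (vcurl (fun y => B y t) x) i
            + m * ∑ j, pd j (fun y => ∫ v : V3, v j * v i * f y v t) x) * Dv i))
        = -(2*c1 + r*c2) * ∑ i, Dv i * Lρ (Pi.single i 1) := by
      rw [h3]
      field_simp
    linear_combination h4
  -- assemble
  have habs := kelvin_abstract
    (fun p : ℝ × ℝ => ∑ i, U (γ p.1 p.2) p.1 i
      * fderiv ℝ (fun p' : ℝ × ℝ => γ p'.1 p'.2) p ((0:ℝ), (1:ℝ)) i)
    (fun σ : ℝ => (1/2 : ℝ) * ∑ i, (U (γ t σ) t i) ^ 2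
      - (𝒰 (ρ (γ t σ) t) + ρ (γ t σ) t * deriv 𝒰 (ρ (γ t σ) t)))
    (fun s : ℝ => (ρ (γ t s) t)⁻¹ *
      dot3 (fun i =>
          μ₀⁻¹ * cross3 (B (γ t s) t) (vcurl (fun y => B y t) (γ t s)) i
            + m * ∑ j, pd j (fun y => ∫ v : V3, v j * v i * f y v t) (γ t s))
        (deriv (fun σ => γ t σ) s))
    t hΦsm hgsm hper hkey
  have hfun : (fun τ => ∫ s in (0:ℝ)..1,
      dot3 (U (γ τ s) τ) (deriv (fun σ => γ τ σ) s))
      = fun τ => ∫ s in (0:ℝ)..1, ∑ i, U (γ τ s) τ i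
        * fderiv ℝ (fun p' : ℝ × ℝ => γ p'.1 p'.2) (τ, s) ((0:ℝ), (1:ℝ)) i := by
    funext τ
    refine intervalIntegral.integral_congr fun s _ => ?_
    rw [(hD τ s).deriv]
    simp only [dot3]
  rw [hfun]
  exact habs
end
end

section
/- Let ρ > 0 and n be smooth real-valued fields and U, A : ℝ³ × ℝ → ℝ³ smooth vector fields on ℝ³ × ℝ, with n and A compactly supported in space (uniformly on compact time intervals), satisfying: ∂_t ρ + ∇·(ρU) = 0, ∂_t n + ∇·(nU) = 0, and ∂_t A + (U·∇)A + (∇U)ᵀA = 0. Set B = ∇×A. Then the modified magnetic helicity H(t) = ∫_{ℝ³} (n/ρ) A·B dx is constant in time. -/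
open MeasureTheory

noncomputable section

/-- directional derivative on the joint space -/
def pdv (v : V3 × ℝ) (g : V3 × ℝ → ℝ) (p : V3 × ℝ) : ℝ := fderiv ℝ g p v

def e3 (j : Fin 3) : V3 × ℝ := (Pi.single j 1, 0)
def et : V3 × ℝ := ((0 : V3), (1 : ℝ))

section helpers
variable {g f h : V3 × ℝ → ℝ} {v w : V3 × ℝ} {p : V3 × ℝ}

lemma ContDiff.pdv_smooth (hg : ContDiff ℝ (⊤ : ℕ∞) g) (v : V3 × ℝ) :
    ContDiff ℝ (⊤ : ℕ∞) (pdv v g) := by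
  have h1 : ContDiff ℝ (⊤ : ℕ∞) (fderiv ℝ g) := hg.fderiv_right (by simp)
  exact h1.clm_apply contDiff_const

lemma pdv_symm (hg : ContDiff ℝ (⊤ : ℕ∞) g) (v w : V3 × ℝ) (p : V3 × ℝ) :
    pdv w (pdv v g) p = pdv v (pdv w g) p := by
  have hd : ∀ q, HasFDerivAt g (fderiv ℝ g q) q := fun q =>
    (hg.differentiable (by simp) q).hasFDerivAt
  have h1 : ContDiff ℝ (⊤ : ℕ∞) (fderiv ℝ g) := hg.fderiv_right (by simp)
  have h2 : HasFDerivAt (fderiv ℝ g) (fderiv ℝ (fderiv ℝ g) p) p :=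
    (h1.differentiable (by simp) p).hasFDerivAt
  have hsym := second_derivative_symmetric hd h2
  have key : ∀ u : V3 × ℝ, pdv u (pdv v g) p = fderiv ℝ (fderiv ℝ g) p u v := by
    intro u
    have : pdv v g = fun q => (fderiv ℝ g q) v := rfl
    rw [this]
    show (fderiv ℝ (fun q => (fderiv ℝ g q) ((fun _ => v) q)) p) u = _
    rw [fderiv_clm_apply (h1.differentiable (by simp) p) (differentiableAt_const v)]
    simp
  rw [key w]
  have key2 : pdv v (pdv w g) p = fderiv ℝ (fderiv ℝ g) p v w := by
    have : pdv w g = fun q => (fderiv ℝ g q) w := rfl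
    rw [this]
    show (fderiv ℝ (fun q => (fderiv ℝ g q) ((fun _ => w) q)) p) v = _
    rw [fderiv_clm_apply (h1.differentiable (by simp) p) (differentiableAt_const w)]
    simp
  rw [key2, hsym w v]

lemma pd_slice (hg : ContDiff ℝ (⊤ : ℕ∞) g) (j : Fin 3) (t : ℝ) (x : V3) :
    pd j (fun y => g (y, t)) x = pdv (e3 j) g (x, t) := by
  have h1 : HasFDerivAt (fun y : V3 => (y, t)) (ContinuousLinearMap.inl ℝ V3 ℝ) x :=
    hasFDerivAt_prodMk_left x t
  have h2 : HasFDerivAt g (fderiv ℝ g (x, t)) (x, t) :=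
    ((hg.differentiable (by simp)) (x, t)).hasFDerivAt
  have h3 := h2.comp x h1
  rw [pd, show (fun y => g (y, t)) = g ∘ (fun y => (y, t)) from rfl, h3.fderiv]
  simp [pdv, e3]

lemma deriv_slice (hg : ContDiff ℝ (⊤ : ℕ∞) g) (x : V3) (t : ℝ) :
    deriv (fun τ => g (x, τ)) t = pdv et g (x, t) := by
  have h1 : HasFDerivAt (fun τ : ℝ => (x, τ))
      (ContinuousLinearMap.inr ℝ V3 ℝ) t := hasFDerivAt_prodMk_right x t
  have h2 : HasFDerivAt g (fderiv ℝ g (x, t)) (x, t) :=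
    ((hg.differentiable (by simp)) (x, t)).hasFDerivAt
  have h3 := (h2.comp t h1).hasDerivAt
  rw [show (fun τ => g (x, τ)) = g ∘ Prod.mk x from rfl, h3.deriv]
  simp [pdv, et]

lemma pdv_add (hf : DifferentiableAt ℝ f p) (hh : DifferentiableAt ℝ h p) :
    pdv v (fun q => f q + h q) p = pdv v f p + pdv v h p := by
  rw [pdv, fderiv_fun_add hf hh]; rfl

lemma pdv_mul (hf : DifferentiableAt ℝ f p) (hh : DifferentiableAt ℝ h p) :
    pdv v (fun q => f q * h q) p = pdv v f p * h p + f p * pdv v h p := by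
  rw [pdv, fderiv_fun_mul hf hh]
  simp [pdv]; ring

lemma pdv_div (hf : DifferentiableAt ℝ f p) (hh : DifferentiableAt ℝ h p) (h0 : h p ≠ 0) :
    pdv v (fun q => f q / h q) p
      = (pdv v f p - f p / h p * pdv v h p) / h p := by
  have hσ : DifferentiableAt ℝ (fun q => f q / h q) p := by
    simp only [div_eq_mul_inv]
    exact hf.mul (hh.inv h0)
  have heq : (fun q => f q / h q * h q) =ᶠ[nhds p] f := by
    filter_upwards [hh.continuousAt.eventually_ne h0] with q hq
    field_simp
  have h2 : pdv v (fun q => f q / h q * h q) p = pdv v f p := by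
    rw [pdv, pdv, heq.fderiv_eq]
  rw [pdv_mul hσ hh] at h2
  field_simp at h2 ⊢
  linear_combination h2

lemma pdv_sum {ι : Type*} (s : Finset ι) (F : ι → V3 × ℝ → ℝ)
    (hF : ∀ i ∈ s, DifferentiableAt ℝ (F i) p) :
    pdv v (fun q => ∑ i ∈ s, F i q) p = ∑ i ∈ s, pdv v (F i) p := by
  rw [pdv, fderiv_fun_sum hF]; simp [pdv]

lemma pdv_zero_fun : pdv v (fun _ => (0 : ℝ)) p = 0 := by
  rw [pdv, fderiv_fun_const]; simp

end helpers

lemma pdv_sub {f h : V3 × ℝ → ℝ} {v p : V3 × ℝ} (hf : DifferentiableAt ℝ f p)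
    (hh : DifferentiableAt ℝ h p) :
    pdv v (fun q => f q - h q) p = pdv v f p - pdv v h p := by
  rw [pdv, fderiv_fun_sub hf hh]; rfl

-- continuation: field setup
def gs (ρ : V3 → ℝ → ℝ) : V3 × ℝ → ℝ := fun p => ρ p.1 p.2
def gv (U : V3 → ℝ → V3) (i : Fin 3) : V3 × ℝ → ℝ := fun p => U p.1 p.2 i

def Wf (A : V3 → ℝ → V3) : V3 × ℝ → ℝ := fun p =>
  gv A 0 p * (pdv (e3 1) (gv A 2) p - pdv (e3 2) (gv A 1) p)
  + gv A 1 p * (pdv (e3 2) (gv A 0) p - pdv (e3 0) (gv A 2) p)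
  + gv A 2 p * (pdv (e3 0) (gv A 1) p - pdv (e3 1) (gv A 0) p)

def Gf (ρ n : V3 → ℝ → ℝ) (A : V3 → ℝ → V3) : V3 × ℝ → ℝ :=
  fun p => gs n p / gs ρ p * Wf A p

section fields
variable {ρ n : V3 → ℝ → ℝ} {U A : V3 → ℝ → V3}

lemma gv_smooth (hU : ContDiff ℝ (⊤ : ℕ∞) (fun p : V3 × ℝ => U p.1 p.2)) (i : Fin 3) :
    ContDiff ℝ (⊤ : ℕ∞) (gv U i) := contDiff_pi.mp hU i

lemma Wf_smooth (hA : ContDiff ℝ (⊤ : ℕ∞) (fun p : V3 × ℝ => A p.1 p.2)) :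
    ContDiff ℝ (⊤ : ℕ∞) (Wf A) := by
  have h := gv_smooth hA
  exact ((((h 0).mul (((h 2).pdv_smooth (e3 1)).sub ((h 1).pdv_smooth (e3 2)))).add
    ((h 1).mul (((h 0).pdv_smooth (e3 2)).sub ((h 2).pdv_smooth (e3 0))))).add
    ((h 2).mul (((h 1).pdv_smooth (e3 0)).sub ((h 0).pdv_smooth (e3 1)))))

lemma sigma_smooth (hρ : ContDiff ℝ (⊤ : ℕ∞) (fun p : V3 × ℝ => ρ p.1 p.2))
    (hρpos : ∀ x t, 0 < ρ x t)
    (hn : ContDiff ℝ (⊤ : ℕ∞) (fun p : V3 × ℝ => n p.1 p.2)) :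
    ContDiff ℝ (⊤ : ℕ∞) (fun p => gs n p / gs ρ p) :=
  (hn : ContDiff ℝ (⊤ : ℕ∞) (gs n)).div hρ (fun p => (hρpos p.1 p.2).ne')

lemma Gf_smooth (hρ : ContDiff ℝ (⊤ : ℕ∞) (fun p : V3 × ℝ => ρ p.1 p.2))
    (hρpos : ∀ x t, 0 < ρ x t)
    (hn : ContDiff ℝ (⊤ : ℕ∞) (fun p : V3 × ℝ => n p.1 p.2))
    (hA : ContDiff ℝ (⊤ : ℕ∞) (fun p : V3 × ℝ => A p.1 p.2)) :
    ContDiff ℝ (⊤ : ℕ∞) (Gf ρ n A) :=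
  (sigma_smooth hρ hρpos hn).mul (Wf_smooth hA)

end fields

section hconv
variable {ρ n : V3 → ℝ → ℝ} {U A : V3 → ℝ → V3}

lemma Hrho (hρ : ContDiff ℝ (⊤ : ℕ∞) (fun p : V3 × ℝ => ρ p.1 p.2))
    (hU : ContDiff ℝ (⊤ : ℕ∞) (fun p : V3 × ℝ => U p.1 p.2))
    (hcontρ : ∀ (x : V3) (t : ℝ),
      deriv (fun τ => ρ x τ) t + ∑ j, pd j (fun y => ρ y t * U y t j) x = 0) :
    ∀ q : V3 × ℝ, pdv et (gs ρ) q
      + ∑ j, (pdv (e3 j) (gs ρ) q * gv U j q + gs ρ q * pdv (e3 j) (gv U j) q) = 0 := by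
  rintro ⟨x, t⟩
  have h := hcontρ x t
  have e1 : deriv (fun τ => ρ x τ) t = pdv et (gs ρ) (x, t) :=
    deriv_slice (g := gs ρ) hρ x t
  have e2 : ∀ j : Fin 3, pd j (fun y => ρ y t * U y t j) x
      = pdv (e3 j) (fun q => gs ρ q * gv U j q) (x, t) := fun j =>
    pd_slice ((hρ : ContDiff ℝ (⊤ : ℕ∞) (gs ρ)).mul (gv_smooth hU j)) j t x
  have e3' : ∀ j : Fin 3, pdv (e3 j) (fun q => gs ρ q * gv U j q) (x, t)
      = pdv (e3 j) (gs ρ) (x, t) * gv U j (x, t)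
        + gs ρ (x, t) * pdv (e3 j) (gv U j) (x, t) := fun j =>
    pdv_mul ((hρ : ContDiff ℝ (⊤ : ℕ∞) (gs ρ)).differentiable (by simp) (x, t))
      ((gv_smooth hU j).differentiable (by simp) (x, t))
  rw [e1] at h
  simp only [e2, e3'] at h
  exact h

lemma Hadv (hU : ContDiff ℝ (⊤ : ℕ∞) (fun p : V3 × ℝ => U p.1 p.2))
    (hA : ContDiff ℝ (⊤ : ℕ∞) (fun p : V3 × ℝ => A p.1 p.2))
    (hadvA : ∀ (x : V3) (t : ℝ) (i : Fin 3),
      deriv (fun τ => A x τ i) t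
          + dot3 (U x t) (fun j => pd j (fun y => A y t i) x)
          + dot3 (A x t) (fun j => pd i (fun y => U y t j) x) = 0) :
    ∀ (q : V3 × ℝ) (i : Fin 3), pdv et (gv A i) q
      + (∑ j, gv U j q * pdv (e3 j) (gv A i) q)
      + (∑ j, gv A j q * pdv (e3 i) (gv U j) q) = 0 := by
  rintro ⟨x, t⟩ i
  have h := hadvA x t i
  simp only [dot3] at h
  have e1 : deriv (fun τ => A x τ i) t = pdv et (gv A i) (x, t) :=
    deriv_slice (g := gv A i) (gv_smooth hA i) x t
  have e2 : ∀ j : Fin 3, pd j (fun y => A y t i) x = pdv (e3 j) (gv A i) (x, t) :=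
    fun j => pd_slice (gv_smooth hA i) j t x
  have e3' : ∀ j : Fin 3, pd i (fun y => U y t j) x = pdv (e3 i) (gv U j) (x, t) :=
    fun j => pd_slice (gv_smooth hU j) i t x
  rw [e1] at h
  simp only [e2, e3'] at h
  exact h

lemma Hadv' (hU : ContDiff ℝ (⊤ : ℕ∞) (fun p : V3 × ℝ => U p.1 p.2))
    (hA : ContDiff ℝ (⊤ : ℕ∞) (fun p : V3 × ℝ => A p.1 p.2))
    (hadvA : ∀ (x : V3) (t : ℝ) (i : Fin 3),
      deriv (fun τ => A x τ i) t
          + dot3 (U x t) (fun j => pd j (fun y => A y t i) x)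
          + dot3 (A x t) (fun j => pd i (fun y => U y t j) x) = 0) :
    ∀ (p : V3 × ℝ) (j i : Fin 3),
      pdv (e3 j) (pdv et (gv A i)) p
      + (∑ k, (pdv (e3 j) (gv U k) p * pdv (e3 k) (gv A i) p
          + gv U k p * pdv (e3 j) (pdv (e3 k) (gv A i)) p))
      + (∑ k, (pdv (e3 j) (gv A k) p * pdv (e3 i) (gv U k) p
          + gv A k p * pdv (e3 j) (pdv (e3 i) (gv U k)) p)) = 0 := by
  intro p j i
  have dU : ∀ k : Fin 3, ContDiff ℝ (⊤ : ℕ∞) (gv U k) := gv_smooth hU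
  have dA : ∀ k : Fin 3, ContDiff ℝ (⊤ : ℕ∞) (gv A k) := gv_smooth hA
  -- the transported one-form equation as a vanishing function
  set Z : V3 × ℝ → ℝ := fun q => pdv et (gv A i) q
      + (∑ k, gv U k q * pdv (e3 k) (gv A i) q)
      + (∑ k, gv A k q * pdv (e3 i) (gv U k) q) with hZdef
  have hZ0 : Z = fun _ => (0 : ℝ) := funext (fun q => Hadv hU hA hadvA q i)
  have hZp : pdv (e3 j) Z p = 0 := by rw [hZ0]; exact pdv_zero_fun
  -- differentiability of the pieces
  have d1 : DifferentiableAt ℝ (pdv et (gv A i)) p :=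
    ((dA i).pdv_smooth et).differentiable (by simp) p
  have dS1 : ∀ k : Fin 3, DifferentiableAt ℝ
      (fun q => gv U k q * pdv (e3 k) (gv A i) q) p := fun k =>
    ((dU k).mul ((dA i).pdv_smooth (e3 k))).differentiable (by simp) p
  have dS2 : ∀ k : Fin 3, DifferentiableAt ℝ
      (fun q => gv A k q * pdv (e3 i) (gv U k) q) p := fun k =>
    ((dA k).mul ((dU k).pdv_smooth (e3 i))).differentiable (by simp) p
  have hs1 : DifferentiableAt ℝ
      (fun q => ∑ k, gv U k q * pdv (e3 k) (gv A i) q) p :=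
    DifferentiableAt.fun_sum (fun k _ => dS1 k)
  have hs2 : DifferentiableAt ℝ
      (fun q => ∑ k, gv A k q * pdv (e3 i) (gv U k) q) p :=
    DifferentiableAt.fun_sum (fun k _ => dS2 k)
  have expand : pdv (e3 j) Z p
      = pdv (e3 j) (pdv et (gv A i)) p
      + (∑ k, (pdv (e3 j) (gv U k) p * pdv (e3 k) (gv A i) p
          + gv U k p * pdv (e3 j) (pdv (e3 k) (gv A i)) p))
      + (∑ k, (pdv (e3 j) (gv A k) p * pdv (e3 i) (gv U k) p
          + gv A k p * pdv (e3 j) (pdv (e3 i) (gv U k)) p)) := by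
    rw [hZdef]
    rw [pdv_add (d1.fun_add hs1) hs2, pdv_add d1 hs1,
      pdv_sum Finset.univ _ (fun k _ => dS1 k), pdv_sum Finset.univ _ (fun k _ => dS2 k)]
    congr 1
    · congr 1
      exact Finset.sum_congr rfl (fun k _ => pdv_mul
        ((dU k).differentiable (by simp) p) (((dA i).pdv_smooth (e3 k)).differentiable (by simp) p))
    · exact Finset.sum_congr rfl (fun k _ => pdv_mul
        ((dA k).differentiable (by simp) p) (((dU k).pdv_smooth (e3 i)).differentiable (by simp) p))
  rw [← expand, hZp]

end hconv

section key
variable {ρ n : V3 → ℝ → ℝ} {U A : V3 → ℝ → V3}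

lemma key_pointwise
    (hρ : ContDiff ℝ (⊤ : ℕ∞) (fun p : V3 × ℝ => ρ p.1 p.2))
    (hρpos : ∀ (x : V3) (t : ℝ), 0 < ρ x t)
    (hn : ContDiff ℝ (⊤ : ℕ∞) (fun p : V3 × ℝ => n p.1 p.2))
    (hU : ContDiff ℝ (⊤ : ℕ∞) (fun p : V3 × ℝ => U p.1 p.2))
    (hA : ContDiff ℝ (⊤ : ℕ∞) (fun p : V3 × ℝ => A p.1 p.2))
    (hcontρ : ∀ (x : V3) (t : ℝ),
      deriv (fun τ => ρ x τ) t + ∑ j, pd j (fun y => ρ y t * U y t j) x = 0)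
    (hcontn : ∀ (x : V3) (t : ℝ),
      deriv (fun τ => n x τ) t + ∑ j, pd j (fun y => n y t * U y t j) x = 0)
    (hadvA : ∀ (x : V3) (t : ℝ) (i : Fin 3),
      deriv (fun τ => A x τ i) t
          + dot3 (U x t) (fun j => pd j (fun y => A y t i) x)
          + dot3 (A x t) (fun j => pd i (fun y => U y t j) x) = 0)
    (p : V3 × ℝ) :
    pdv et (Gf ρ n A) p
      + ∑ j, pdv (e3 j) (fun q => Gf ρ n A q * gv U j q) p = 0 := by
  have dUc : ∀ k : Fin 3, ContDiff ℝ (⊤ : ℕ∞) (gv U k) := gv_smooth hU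
  have dAc : ∀ k : Fin 3, ContDiff ℝ (⊤ : ℕ∞) (gv A k) := gv_smooth hA
  have dρp : DifferentiableAt ℝ (gs ρ) p := (hρ : ContDiff ℝ (⊤ : ℕ∞) (gs ρ)).differentiable (by simp) p
  have dnp : DifferentiableAt ℝ (gs n) p := (hn : ContDiff ℝ (⊤ : ℕ∞) (gs n)).differentiable (by simp) p
  have dσp : DifferentiableAt ℝ (fun q => gs n q / gs ρ q) p :=
    (sigma_smooth hρ hρpos hn).differentiable (by simp) p
  have dWp : DifferentiableAt ℝ (Wf A) p := (Wf_smooth hA).differentiable (by simp) p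
  have dGp : DifferentiableAt ℝ (Gf ρ n A) p :=
    (Gf_smooth hρ hρpos hn hA).differentiable (by simp) p
  have dUp : ∀ k : Fin 3, DifferentiableAt ℝ (gv U k) p :=
    fun k => (dUc k).differentiable (by simp) p
  have dAp : ∀ k : Fin 3, DifferentiableAt ℝ (gv A k) p :=
    fun k => (dAc k).differentiable (by simp) p
  have dpAp : ∀ (v : V3 × ℝ) (k : Fin 3), DifferentiableAt ℝ (pdv v (gv A k)) p :=
    fun v k => ((dAc k).pdv_smooth v).differentiable (by simp) p
  have hρ0 : gs ρ p ≠ 0 := (hρpos p.1 p.2).ne'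
  -- expansions
  have Etop : ∀ (v : V3 × ℝ) (j : Fin 3), pdv v (fun q => Gf ρ n A q * gv U j q) p
      = pdv v (Gf ρ n A) p * gv U j p + Gf ρ n A p * pdv v (gv U j) p :=
    fun v j => pdv_mul dGp (dUp j)
  have EG : ∀ v : V3 × ℝ, pdv v (Gf ρ n A) p
      = pdv v (fun q => gs n q / gs ρ q) p * Wf A p
        + gs n p / gs ρ p * pdv v (Wf A) p :=
    fun v => pdv_mul dσp dWp
  have Eσ : ∀ v : V3 × ℝ, pdv v (fun q => gs n q / gs ρ q) p
      = (pdv v (gs n) p - gs n p / gs ρ p * pdv v (gs ρ) p) / gs ρ p :=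
    fun v => pdv_div dnp dρp hρ0
  have EW : ∀ v : V3 × ℝ, pdv v (Wf A) p
      = (pdv v (gv A 0) p * (pdv (e3 1) (gv A 2) p - pdv (e3 2) (gv A 1) p)
          + gv A 0 p * (pdv v (pdv (e3 1) (gv A 2)) p - pdv v (pdv (e3 2) (gv A 1)) p))
        + (pdv v (gv A 1) p * (pdv (e3 2) (gv A 0) p - pdv (e3 0) (gv A 2) p)
          + gv A 1 p * (pdv v (pdv (e3 2) (gv A 0)) p - pdv v (pdv (e3 0) (gv A 2)) p))
        + (pdv v (gv A 2) p * (pdv (e3 0) (gv A 1) p - pdv (e3 1) (gv A 0) p)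
          + gv A 2 p * (pdv v (pdv (e3 0) (gv A 1)) p - pdv v (pdv (e3 1) (gv A 0)) p)) := by
    intro v
    have dT1 : DifferentiableAt ℝ
        (fun q => gv A 0 q * (pdv (e3 1) (gv A 2) q - pdv (e3 2) (gv A 1) q)) p :=
      (dAp 0).mul ((dpAp (e3 1) 2).sub (dpAp (e3 2) 1))
    have dT2 : DifferentiableAt ℝ
        (fun q => gv A 1 q * (pdv (e3 2) (gv A 0) q - pdv (e3 0) (gv A 2) q)) p :=
      (dAp 1).mul ((dpAp (e3 2) 0).sub (dpAp (e3 0) 2))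
    have dT3 : DifferentiableAt ℝ
        (fun q => gv A 2 q * (pdv (e3 0) (gv A 1) q - pdv (e3 1) (gv A 0) q)) p :=
      (dAp 2).mul ((dpAp (e3 0) 1).sub (dpAp (e3 1) 0))
    have s0 : pdv v (Wf A) p
        = pdv v (fun q => gv A 0 q * (pdv (e3 1) (gv A 2) q - pdv (e3 2) (gv A 1) q)
            + gv A 1 q * (pdv (e3 2) (gv A 0) q - pdv (e3 0) (gv A 2) q)) p
          + pdv v (fun q => gv A 2 q * (pdv (e3 0) (gv A 1) q - pdv (e3 1) (gv A 0) q)) p :=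
      pdv_add (dT1.add dT2) dT3
    have s1 : pdv v (fun q => gv A 0 q * (pdv (e3 1) (gv A 2) q - pdv (e3 2) (gv A 1) q)
            + gv A 1 q * (pdv (e3 2) (gv A 0) q - pdv (e3 0) (gv A 2) q)) p
        = pdv v (fun q => gv A 0 q * (pdv (e3 1) (gv A 2) q - pdv (e3 2) (gv A 1) q)) p
          + pdv v (fun q => gv A 1 q * (pdv (e3 2) (gv A 0) q - pdv (e3 0) (gv A 2) q)) p :=
      pdv_add dT1 dT2
    have m1 : pdv v (fun q => gv A 0 q * (pdv (e3 1) (gv A 2) q - pdv (e3 2) (gv A 1) q)) p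
        = pdv v (gv A 0) p * (pdv (e3 1) (gv A 2) p - pdv (e3 2) (gv A 1) p)
          + gv A 0 p * (pdv v (fun q => pdv (e3 1) (gv A 2) q - pdv (e3 2) (gv A 1) q) p) :=
      pdv_mul (dAp 0) ((dpAp (e3 1) 2).sub (dpAp (e3 2) 1))
    have m2 : pdv v (fun q => gv A 1 q * (pdv (e3 2) (gv A 0) q - pdv (e3 0) (gv A 2) q)) p
        = pdv v (gv A 1) p * (pdv (e3 2) (gv A 0) p - pdv (e3 0) (gv A 2) p)
          + gv A 1 p * (pdv v (fun q => pdv (e3 2) (gv A 0) q - pdv (e3 0) (gv A 2) q) p) :=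
      pdv_mul (dAp 1) ((dpAp (e3 2) 0).sub (dpAp (e3 0) 2))
    have m3 : pdv v (fun q => gv A 2 q * (pdv (e3 0) (gv A 1) q - pdv (e3 1) (gv A 0) q)) p
        = pdv v (gv A 2) p * (pdv (e3 0) (gv A 1) p - pdv (e3 1) (gv A 0) p)
          + gv A 2 p * (pdv v (fun q => pdv (e3 0) (gv A 1) q - pdv (e3 1) (gv A 0) q) p) :=
      pdv_mul (dAp 2) ((dpAp (e3 0) 1).sub (dpAp (e3 1) 0))
    have n1 : pdv v (fun q => pdv (e3 1) (gv A 2) q - pdv (e3 2) (gv A 1) q) p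
        = pdv v (pdv (e3 1) (gv A 2)) p - pdv v (pdv (e3 2) (gv A 1)) p :=
      pdv_sub (dpAp (e3 1) 2) (dpAp (e3 2) 1)
    have n2 : pdv v (fun q => pdv (e3 2) (gv A 0) q - pdv (e3 0) (gv A 2) q) p
        = pdv v (pdv (e3 2) (gv A 0)) p - pdv v (pdv (e3 0) (gv A 2)) p :=
      pdv_sub (dpAp (e3 2) 0) (dpAp (e3 0) 2)
    have n3 : pdv v (fun q => pdv (e3 0) (gv A 1) q - pdv (e3 1) (gv A 0) q) p
        = pdv v (pdv (e3 0) (gv A 1)) p - pdv v (pdv (e3 1) (gv A 0)) p :=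
      pdv_sub (dpAp (e3 0) 1) (dpAp (e3 1) 0)
    rw [s0, s1, m1, m2, m3, n1, n2, n3]
  -- solved forms of the hypotheses
  have hRt : pdv et (gs ρ) p
      = -(∑ j, (pdv (e3 j) (gs ρ) p * gv U j p + gs ρ p * pdv (e3 j) (gv U j) p)) := by
    linarith [Hrho hρ hU hcontρ p]
  have hNt : pdv et (gs n) p
      = -(∑ j, (pdv (e3 j) (gs n) p * gv U j p + gs n p * pdv (e3 j) (gv U j) p)) := by
    linarith [Hrho hn hU hcontn p]
  have hAt : ∀ i : Fin 3, pdv et (gv A i) p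
      = -((∑ j, gv U j p * pdv (e3 j) (gv A i) p)
          + (∑ j, gv A j p * pdv (e3 i) (gv U j) p)) := by
    intro i; linarith [Hadv hU hA hadvA p i]
  have hM : ∀ j i : Fin 3, pdv (e3 j) (pdv et (gv A i)) p
      = -((∑ k, (pdv (e3 j) (gv U k) p * pdv (e3 k) (gv A i) p
          + gv U k p * pdv (e3 j) (pdv (e3 k) (gv A i)) p))
        + (∑ k, (pdv (e3 j) (gv A k) p * pdv (e3 i) (gv U k) p
          + gv A k p * pdv (e3 j) (pdv (e3 i) (gv U k)) p))) := by
    intro j i; linarith [Hadv' hU hA hadvA p j i]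
  -- symmetry of second derivatives
  have swapT : ∀ (k i : Fin 3), pdv et (pdv (e3 k) (gv A i)) p
      = pdv (e3 k) (pdv et (gv A i)) p := fun k i => pdv_symm (dAc i) (e3 k) et p
  have swapA : ∀ (a b i : Fin 3), pdv (e3 a) (pdv (e3 b) (gv A i)) p
      = pdv (e3 b) (pdv (e3 a) (gv A i)) p := fun a b i => pdv_symm (dAc i) (e3 b) (e3 a) p
  have swapU : ∀ (a b i : Fin 3), pdv (e3 a) (pdv (e3 b) (gv U i)) p
      = pdv (e3 b) (pdv (e3 a) (gv U i)) p := fun a b i => pdv_symm (dUc i) (e3 b) (e3 a) p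
  -- expand the goal
  rw [Fin.sum_univ_three]
  simp only [Etop, EG, Eσ, EW]
  simp only [Gf, Wf]
  simp only [swapT]
  simp only [hRt, hNt, hAt, hM]
  simp only [Fin.sum_univ_three]
  rw [swapA 1 0 0, swapA 1 0 1, swapA 1 0 2, swapA 2 0 0, swapA 2 0 1, swapA 2 0 2,
    swapA 2 1 0, swapA 2 1 1, swapA 2 1 2]
  rw [swapU 1 0 0, swapU 1 0 1, swapU 1 0 2, swapU 2 0 0, swapU 2 0 1, swapU 2 0 2,
    swapU 2 1 0, swapU 2 1 1, swapU 2 1 2]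
  field_simp
  ring
end key

section divthm

open Set in
/-- Divergence theorem on ℝ³ for a compactly supported smooth vector field. -/
lemma integral_div_zero (Φ : V3 → V3) (hΦ : ContDiff ℝ (⊤ : ℕ∞) Φ) (R : ℝ) (hR : 0 ≤ R)
    (hs : ∀ x : V3, R < ‖x‖ → Φ x = 0) :
    ∫ x : V3, (∑ j, pd j (fun y => Φ y j) x) = 0 := by
  set a : V3 := fun _ => -(R+1) with ha
  set b : V3 := fun _ => (R+1) with hb
  have hnorm : ∀ x : V3, x ∉ Set.Icc a b → R < ‖x‖ := by
    intro x hx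
    simp only [Set.mem_Icc, Pi.le_def, not_and_or, not_forall, not_le, ha, hb] at hx
    have : ∃ i : Fin 3, R + 1 ≤ |x i| := by
      rcases hx with ⟨i, hi⟩ | ⟨i, hi⟩
      · exact ⟨i, by rw [abs_of_nonpos (by linarith)]; linarith⟩
      · exact ⟨i, by rw [abs_of_nonneg (by linarith)]; linarith⟩
    obtain ⟨i, hi⟩ := this
    calc R < R + 1 := by linarith
    _ ≤ |x i| := hi
    _ ≤ ‖x‖ := by rw [← Real.norm_eq_abs]; exact norm_le_pi_norm x i
  -- component functions and their derivatives
  have hd : ∀ x : V3, HasFDerivAt Φ (fderiv ℝ Φ x) x :=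
    fun x => (hΦ.differentiable (by simp) x).hasFDerivAt
  have hpd : ∀ (j : Fin 3) (x : V3), pd j (fun y => Φ y j) x = fderiv ℝ Φ x (Pi.single j 1) j := by
    intro j x
    have h1 : HasFDerivAt (fun y => Φ y j)
        ((ContinuousLinearMap.proj j).comp (fderiv ℝ Φ x)) x :=
      (ContinuousLinearMap.proj j : V3 →L[ℝ] ℝ).hasFDerivAt.comp x (hd x)
    rw [pd, h1.fderiv]; rfl
  have hdiv_cont : Continuous (fun x : V3 => ∑ j, fderiv ℝ Φ x (Pi.single j 1) j) := by
    have h1 : Continuous (fderiv ℝ Φ) := (hΦ.fderiv_right (m := (⊤ : ℕ∞)) (by simp)).continuous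
    exact continuous_finset_sum _ (fun j _ =>
      (continuous_pi_iff.mp ((ContinuousLinearMap.apply ℝ V3 (Pi.single j 1 : V3)).continuous.comp h1)) j)
  have key := integral_divergence_of_hasFDerivAt_off_countable (a := a) (b := b)
    ((fun i => by simp only [ha, hb]; linarith) : a ≤ b) Φ (fun x => fderiv ℝ Φ x) ∅
    Set.countable_empty hΦ.continuous.continuousOn
    (fun x _ => hd x)
    (hdiv_cont.continuousOn.integrableOn_compact isCompact_Icc)
  -- the face integrals vanish
  have hface : ∀ (i : Fin 3) (c : ℝ), |c| = R + 1 →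
      ∀ y : Fin 2 → ℝ, Φ (Fin.insertNth i c y : V3) i = 0 := by
    intro i c hc y
    have h1 : R < ‖(Fin.insertNth i c y : V3)‖ := by
      calc R < R + 1 := by linarith
      _ = |(Fin.insertNth i c y : V3) i| := by rw [Fin.insertNth_apply_same, hc]
      _ ≤ ‖(Fin.insertNth i c y : V3)‖ := by
          rw [← Real.norm_eq_abs]; exact norm_le_pi_norm _ i
    rw [hs _ h1]; rfl
  have hzero : ∀ x : V3, x ∉ Set.Icc a b →
      (∑ j, fderiv ℝ Φ x (Pi.single j 1) j) = 0 := by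
    intro x hx
    have hev : Φ =ᶠ[nhds x] (fun _ => (0 : V3)) := by
      have hopen : IsOpen {y : V3 | R < ‖y‖} := isOpen_lt continuous_const continuous_norm
      filter_upwards [hopen.mem_nhds (hnorm x hx)] with y hy
      exact hs y hy
    rw [hev.fderiv_eq, fderiv_fun_const]
    simp
  have lhs_eq : ∫ x : V3, (∑ j, pd j (fun y => Φ y j) x)
      = ∫ x in Set.Icc a b, ∑ j, fderiv ℝ Φ x (Pi.single j 1) j := by
    rw [setIntegral_eq_integral_of_forall_compl_eq_zero hzero]
    exact integral_congr_ae (Filter.Eventually.of_forall (fun x => by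
      exact Finset.sum_congr rfl (fun j _ => hpd j x)))
  rw [lhs_eq, key]
  refine Finset.sum_eq_zero (fun i _ => ?_)
  have h1 : ∀ y, Φ (Fin.insertNth i (b i) y) i = 0 :=
    hface i (b i) (by simp [hb]; linarith) 
  have h2 : ∀ y, Φ (Fin.insertNth i (a i) y) i = 0 :=
    hface i (a i) (by simp [ha]; rw [abs_of_nonpos (by linarith)]; linarith)
  simp only [h1, h2, integral_zero, sub_zero]

end divthm

section assemble
variable {ρ n : V3 → ℝ → ℝ} {U A : V3 → ℝ → V3}

lemma hasDerivAt_slice {g : V3 × ℝ → ℝ} (hg : ContDiff ℝ (⊤ : ℕ∞) g) (x : V3) (t : ℝ) :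
    HasDerivAt (fun τ => g (x, τ)) (pdv et g (x, t)) t := by
  have h2 : HasFDerivAt g (fderiv ℝ g (x, t)) (x, t) :=
    ((hg.differentiable (by simp)) (x, t)).hasFDerivAt
  have h3 := (h2.comp t (hasFDerivAt_prodMk_right x t)).hasDerivAt
  have e : pdv et g (x, t) = (fderiv ℝ g (x, t) ∘SL ContinuousLinearMap.inr ℝ V3 ℝ) 1 := by
    simp [pdv, et]
  rw [e]; exact h3

lemma cont_slice {g : V3 × ℝ → ℝ} (hg : ContDiff ℝ (⊤ : ℕ∞) g) (t : ℝ) :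
    Continuous (fun x : V3 => g (x, t)) :=
  hg.continuous.comp (continuous_id.prodMk continuous_const)

lemma integrand_eq (hA : ContDiff ℝ (⊤ : ℕ∞) (fun p : V3 × ℝ => A p.1 p.2)) (x : V3) (t : ℝ) :
    (n x t / ρ x t) * dot3 (A x t) (vcurl (fun y => A y t) x) = Gf ρ n A (x, t) := by
  have c : ∀ (a b : Fin 3), pd a (fun y => A y t b) x = pdv (e3 a) (gv A b) (x, t) :=
    fun a b => pd_slice (gv_smooth hA b) a t x
  simp only [dot3, vcurl, Gf, Wf, Fin.sum_univ_three, Matrix.cons_val_zero,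
    Matrix.cons_val_one, Matrix.head_cons, Matrix.cons_val_two, Matrix.tail_cons]
  rw [c 1 2, c 2 1, c 2 0, c 0 2, c 0 1, c 1 0]
  rfl

theorem helicity_main
    (hρ : ContDiff ℝ (⊤ : ℕ∞) (fun p : V3 × ℝ => ρ p.1 p.2))
    (hρpos : ∀ (x : V3) (t : ℝ), 0 < ρ x t)
    (hn : ContDiff ℝ (⊤ : ℕ∞) (fun p : V3 × ℝ => n p.1 p.2))
    (hU : ContDiff ℝ (⊤ : ℕ∞) (fun p : V3 × ℝ => U p.1 p.2))
    (hA : ContDiff ℝ (⊤ : ℕ∞) (fun p : V3 × ℝ => A p.1 p.2))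
    (hsupp : ∀ a b : ℝ, ∃ R : ℝ, ∀ x : V3, R < ‖x‖ → ∀ t ∈ Set.Icc a b,
      n x t = 0 ∧ A x t = 0)
    (hcontρ : ∀ (x : V3) (t : ℝ),
      deriv (fun τ => ρ x τ) t + ∑ j, pd j (fun y => ρ y t * U y t j) x = 0)
    (hcontn : ∀ (x : V3) (t : ℝ),
      deriv (fun τ => n x τ) t + ∑ j, pd j (fun y => n y t * U y t j) x = 0)
    (hadvA : ∀ (x : V3) (t : ℝ) (i : Fin 3),
      deriv (fun τ => A x τ i) t
          + dot3 (U x t) (fun j => pd j (fun y => A y t i) x)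
          + dot3 (A x t) (fun j => pd i (fun y => U y t j) x) = 0) :
    ∀ t : ℝ, HasDerivAt (fun s => ∫ x : V3, Gf ρ n A (x, s)) 0 t := by
  intro t
  have hG : ContDiff ℝ (⊤ : ℕ∞) (Gf ρ n A) := Gf_smooth hρ hρpos hn hA
  have hG' : ContDiff ℝ (⊤ : ℕ∞) (pdv et (Gf ρ n A)) := hG.pdv_smooth et
  obtain ⟨R₀, hR₀⟩ := hsupp (t - 1) (t + 1)
  set R : ℝ := max R₀ 0 with hRdef
  have hRnn : (0 : ℝ) ≤ R := le_max_right _ _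
  have hGvan : ∀ (x : V3) (τ : ℝ), R < ‖x‖ → τ ∈ Set.Icc (t - 1) (t + 1) →
      Gf ρ n A (x, τ) = 0 := by
    intro x τ hx hτ
    have h0 : gs n (x, τ) = 0 := (hR₀ x (lt_of_le_of_lt (le_max_left _ _) hx) τ hτ).1
    simp only [Gf]
    rw [h0, zero_div, zero_mul]
  have hGvan' : ∀ (x : V3) (τ : ℝ), R < ‖x‖ → τ ∈ Set.Ioo (t - 1) (t + 1) →
      pdv et (Gf ρ n A) (x, τ) = 0 := by
    intro x τ hx hτ
    have hopen : IsOpen ({y : V3 | R < ‖y‖} ×ˢ Set.Ioo (t - 1) (t + 1)) :=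
      (isOpen_lt continuous_const continuous_norm).prod isOpen_Ioo
    have hev : Gf ρ n A =ᶠ[nhds (x, τ)] (fun _ => (0 : ℝ)) := by
      filter_upwards [hopen.mem_nhds ⟨hx, hτ⟩] with q hq
      exact hGvan q.1 q.2 hq.1 (Set.Ioo_subset_Icc_self hq.2)
    rw [pdv, hev.fderiv_eq, fderiv_fun_const]
    simp
  -- bound on the compact set
  obtain ⟨C, hC⟩ := (((isCompact_closedBall (0 : V3) R).prod
      (isCompact_Icc (a := t - 1) (b := t + 1)))).exists_bound_of_continuousOn
    hG'.continuous.continuousOn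
  set bound : V3 → ℝ := (Metric.closedBall (0 : V3) R).indicator (fun _ => ‖C‖) with hbdef
  have hCsupp : HasCompactSupport (fun x : V3 => Gf ρ n A (x, t)) := by
    apply HasCompactSupport.intro (isCompact_closedBall (0 : V3) R)
    intro x hx
    rw [Metric.mem_closedBall, dist_zero_right, not_le] at hx
    exact hGvan x t hx ⟨by linarith, by linarith⟩
  have main := hasDerivAt_integral_of_dominated_loc_of_deriv_le
    (F := fun τ (x : V3) => Gf ρ n A (x, τ)) (F' := fun τ (x : V3) => pdv et (Gf ρ n A) (x, τ))
    (x₀ := t) (bound := bound) (μ := volume) (s := Metric.ball t (1/2)) (Metric.ball_mem_nhds t (by norm_num))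
    (Filter.Eventually.of_forall (fun τ => ((cont_slice hG τ).aestronglyMeasurable)))
    ((cont_slice hG t).integrable_of_hasCompactSupport hCsupp)
    ((cont_slice hG' t).aestronglyMeasurable)
    (Filter.Eventually.of_forall (fun x => by
      intro τ hτ
      rw [Metric.mem_ball, Real.dist_eq] at hτ
      have hτ1 : τ ∈ Set.Icc (t - 1) (t + 1) := by
        constructor <;> [skip; skip] <;> cases' abs_lt.mp hτ with h1 h2 <;> linarith
      rcases le_or_gt ‖x‖ R with hxR | hxR
      · have hmem : x ∈ Metric.closedBall (0 : V3) R := by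
          rw [Metric.mem_closedBall, dist_zero_right]; exact hxR
        rw [hbdef, Set.indicator_of_mem hmem]
        calc ‖pdv et (Gf ρ n A) (x, τ)‖ ≤ C := hC (x, τ) ⟨hmem, hτ1⟩
        _ ≤ ‖C‖ := le_abs_self C
      · have hmem : x ∉ Metric.closedBall (0 : V3) R := by
          rw [Metric.mem_closedBall, dist_zero_right, not_le]; exact hxR
        rw [hbdef, Set.indicator_of_notMem hmem]
        have h0 : pdv et (Gf ρ n A) (x, τ) = 0 :=
          hGvan' x τ hxR (by cases' abs_lt.mp hτ with h1 h2; exact ⟨by linarith, by linarith⟩)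
        calc ‖pdv et (Gf ρ n A) (x, τ)‖ = 0 := by rw [h0, norm_zero]
        _ ≤ 0 := le_rfl))
    (by
      rw [hbdef, integrable_indicator_iff measurableSet_closedBall]
      exact integrableOn_const (isCompact_closedBall _ _).measure_lt_top.ne)
    (Filter.Eventually.of_forall (fun x => by
      intro τ _
      exact hasDerivAt_slice hG x τ))
  -- the derivative integrand is a total divergence, hence integrates to zero
  have hzero : (∫ x : V3, pdv et (Gf ρ n A) (x, t)) = 0 := by
    set Φt : V3 → V3 := fun y => fun j => Gf ρ n A (y, t) * U y t j with hΦdef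
    have hΦsmooth : ContDiff ℝ (⊤ : ℕ∞) Φt := by
      apply contDiff_pi.mpr
      intro j
      have hincl : ContDiff ℝ (⊤ : ℕ∞) (fun y : V3 => (y, t)) := contDiff_id.prodMk contDiff_const
      exact ((hG.comp hincl).mul ((gv_smooth hU j).comp hincl))
    have hΦsupp : ∀ x : V3, R < ‖x‖ → Φt x = 0 := by
      intro x hx
      funext j
      rw [hΦdef]
      simp only
      rw [hGvan x t hx ⟨by linarith, by linarith⟩, zero_mul]
      rfl
    have hconv : ∀ (j : Fin 3) (x : V3),
        pdv (e3 j) (fun q => Gf ρ n A q * gv U j q) (x, t) = pd j (fun y => Φt y j) x :=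
      fun j x => (pd_slice (hG.mul (gv_smooth hU j)) j t x).symm
    have step1 : (∫ x : V3, pdv et (Gf ρ n A) (x, t))
        = ∫ x : V3, -(∑ j, pd j (fun y => Φt y j) x) := by
      refine integral_congr_ae (Filter.Eventually.of_forall (fun x => ?_))
      show pdv et (Gf ρ n A) (x, t) = -(∑ j, pd j (fun y => Φt y j) x)
      have hk := key_pointwise hρ hρpos hn hU hA hcontρ hcontn hadvA (x, t)
      have : pdv et (Gf ρ n A) (x, t)
          = -(∑ j, pdv (e3 j) (fun q => Gf ρ n A q * gv U j q) (x, t)) := by linarith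
      rw [this]
      congr 1
      exact Finset.sum_congr rfl (fun j _ => hconv j x)
    rw [step1, integral_neg, integral_div_zero Φt hΦsmooth R hRnn hΦsupp, neg_zero]
  rw [← hzero]
  exact main.2

end assemble


/-- the modified magnetic helicity `H(t) = ∫ (n/ρ) A·B dx`, with
`B = ∇×A`, is constant in time whenever `ρ` and `n` satisfy continuity
equations with velocity `U` and the one-form `A` is Lie-transported by `U`. -/
theorem modified_magnetic_helicity_conserved
    (ρ n : V3 → ℝ → ℝ) (U A : V3 → ℝ → V3)
    (hρ : ContDiff ℝ (⊤ : ℕ∞) (fun p : V3 × ℝ => ρ p.1 p.2))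
    (hρpos : ∀ (x : V3) (t : ℝ), 0 < ρ x t)
    (hn : ContDiff ℝ (⊤ : ℕ∞) (fun p : V3 × ℝ => n p.1 p.2))
    (hU : ContDiff ℝ (⊤ : ℕ∞) (fun p : V3 × ℝ => U p.1 p.2))
    (hA : ContDiff ℝ (⊤ : ℕ∞) (fun p : V3 × ℝ => A p.1 p.2))
    -- n and A compactly supported in space, uniformly on compact time intervals:
    (hsupp : ∀ a b : ℝ, ∃ R : ℝ, ∀ x : V3, R < ‖x‖ → ∀ t ∈ Set.Icc a b,
      n x t = 0 ∧ A x t = 0)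
    -- continuity equations for ρ and n:
    (hcontρ : ∀ (x : V3) (t : ℝ),
      deriv (fun τ => ρ x τ) t + ∑ j, pd j (fun y => ρ y t * U y t j) x = 0)
    (hcontn : ∀ (x : V3) (t : ℝ),
      deriv (fun τ => n x τ) t + ∑ j, pd j (fun y => n y t * U y t j) x = 0)
    -- Lie transport of the magnetic potential one-form A:
    (hadvA : ∀ (x : V3) (t : ℝ) (i : Fin 3),
      deriv (fun τ => A x τ i) t
          + dot3 (U x t) (fun j => pd j (fun y => A y t i) x)
          + dot3 (A x t) (fun j => pd i (fun y => U y t j) x) = 0) :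
    ∀ t₁ t₂ : ℝ,
      (∫ x : V3, (n x t₁ / ρ x t₁) * dot3 (A x t₁) (vcurl (fun y => A y t₁) x))
        = ∫ x : V3, (n x t₂ / ρ x t₂) * dot3 (A x t₂) (vcurl (fun y => A y t₂) x) := by
  intro t₁ t₂
  have hmain := helicity_main hρ hρpos hn hU hA hsupp hcontρ hcontn hadvA
  have hdiff : Differentiable ℝ (fun s => ∫ x : V3, Gf ρ n A (x, s)) :=
    fun s => (hmain s).differentiableAt
  have hconst : (∫ x : V3, Gf ρ n A (x, t₁)) = ∫ x : V3, Gf ρ n A (x, t₂) :=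
    is_const_of_deriv_eq_zero hdiff (fun s => (hmain s).deriv) t₁ t₂
  calc (∫ x : V3, (n x t₁ / ρ x t₁) * dot3 (A x t₁) (vcurl (fun y => A y t₁) x))
      = ∫ x : V3, Gf ρ n A (x, t₁) :=
        integral_congr_ae (Filter.Eventually.of_forall (fun x => integrand_eq hA x t₁))
    _ = ∫ x : V3, Gf ρ n A (x, t₂) := hconst
    _ = ∫ x : V3, (n x t₂ / ρ x t₂) * dot3 (A x t₂) (vcurl (fun y => A y t₂) x) :=
        integral_congr_ae (Filter.Eventually.of_forall (fun x => (integrand_eq hA x t₂).symm))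
end
end
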